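/- If the focused sequent calculus for MSEL_Σ2 derives the sequent ⊢ ?^∞Π, ⟨c₀⟩, then the two-register Minsky machine halts from the configuration c₀ (and a halting trace can be read off the focused proof). -/
import Mathlib


namespace Msel

/-- Subexponential labels of the signature `Σ₂ = ⟨{∞, a, b}, {∞}, ≤⟩`. -/
inductive Lbl : Type
  | inf  -- the unbounded label ∞
  | la   -- the bounded label a
  | lb   -- the bounded label b
deriving DecidableEq

/-- The pre-order on labels: the reflexive-transitive closure of `a ≤ ∞` and `b ≤ ∞`. -/
def Lbl.le (u v : Lbl) : Prop := u = v ∨ v = Lbl.inf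

/-- A label is unbounded iff it is ∞. -/
def Lbl.unb (u : Lbl) : Prop := u = Lbl.inf

/-- Formulas of multiplicative subexponential logic MSEL_Σ₂.
Atoms are named by natural numbers. -/
inductive Fm : Type
  | atom (p : ℕ)            -- atom p
  | natom (p : ℕ)           -- negated atom ¬p
  | tens (A B : Fm)         -- A ⊗ B
  | one                     -- 1
  | par (A B : Fm)          -- A ⅋ B
  | bot                     -- ⊥
  | bang (u : Lbl) (A : Fm) -- !^u A
  | qm (u : Lbl) (A : Fm)   -- ?^u A
deriving DecidableEq

/-- The (unfocused) one-sided sequent calculus for MSEL_Σ₂; `Der Γ` means `⊢ Γ` is derivable. -/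
inductive Der : Multiset Fm → Prop
  | init (p : ℕ) : Der {Fm.atom p, Fm.natom p}
  | tens {Γ Δ : Multiset Fm} {A B : Fm} :
      Der (A ::ₘ Γ) → Der (B ::ₘ Δ) → Der (Fm.tens A B ::ₘ (Γ + Δ))
  | one : Der {Fm.one}
  | par {Γ : Multiset Fm} {A B : Fm} :
      Der (A ::ₘ B ::ₘ Γ) → Der (Fm.par A B ::ₘ Γ)
  | bot {Γ : Multiset Fm} : Der Γ → Der (Fm.bot ::ₘ Γ)
  | qm {Γ : Multiset Fm} {A : Fm} {u : Lbl} :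
      Der (A ::ₘ Γ) → Der (Fm.qm u A ::ₘ Γ)
  | bang {Γ : Multiset Fm} {C : Fm} {u : Lbl} :
      (∀ F ∈ Γ, ∃ v B, F = Fm.qm v B ∧ Lbl.le u v) →
      Der (C ::ₘ Γ) → Der (Fm.bang u C ::ₘ Γ)
  | weak {Γ : Multiset Fm} {A : Fm} :
      Der Γ → Der (Fm.qm Lbl.inf A ::ₘ Γ)
  | contr {Γ : Multiset Fm} {A : Fm} :
      Der (Fm.qm Lbl.inf A ::ₘ Fm.qm Lbl.inf A ::ₘ Γ) →
      Der (Fm.qm Lbl.inf A ::ₘ Γ)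

/-- Positive formulas: atoms, ⊗, 1, !. -/
def Fm.isPos : Fm → Prop
  | .atom _ => True
  | .tens _ _ => True
  | .one => True
  | .bang _ _ => True
  | _ => False

/-- Negative formulas: negated atoms, ⅋, ⊥, ?. -/
def Fm.isNeg : Fm → Prop
  | .natom _ => True
  | .par _ _ => True
  | .bot => True
  | .qm _ _ => True
  | _ => False

/-- Neutral formulas: positive formulas, atoms, negated atoms and ?-formulas
(i.e. everything except ⅋ and ⊥). -/
def Fm.isNeutral : Fm → Prop
  | .par _ _ => False
  | .bot => False
  | _ => True

/-- The focused sequent calculus for MSEL_Σ₂.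
`FDer Γ none` is the unfocused sequent `⊢ Γ`;
`FDer Ω (some A)` is the focused sequent `⊢ Ω, [A]`. -/
inductive FDer : Multiset Fm → Option Fm → Prop
  | finit {Θ : Multiset Fm} (p : ℕ) :
      (∀ F ∈ Θ, ∃ B, F = Fm.qm Lbl.inf B) →
      FDer (Fm.natom p ::ₘ Θ) (some (Fm.atom p))
  | ftens {Θ Ω₁ Ω₂ : Multiset Fm} {B C : Fm} :
      (∀ F ∈ Θ, ∃ A, F = Fm.qm Lbl.inf A) →
      (∀ F ∈ Ω₁, F.isNeutral) → (∀ F ∈ Ω₂, F.isNeutral) →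
      FDer (Θ + Ω₁) (some B) → FDer (Θ + Ω₂) (some C) →
      FDer (Θ + Ω₁ + Ω₂) (some (Fm.tens B C))
  | fone {Θ : Multiset Fm} :
      (∀ F ∈ Θ, ∃ B, F = Fm.qm Lbl.inf B) → FDer Θ (some Fm.one)
  | fbang {Γ Δ : Multiset Fm} {u : Lbl} {C : Fm} :
      (∀ F ∈ Γ, ∃ v B, F = Fm.qm v B ∧ Lbl.le u v) →
      (∀ F ∈ Δ, ∃ B, F = Fm.qm Lbl.inf B) →
      FDer (C ::ₘ Γ) none → FDer (Γ + Δ) (some (Fm.bang u C))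
  | blur {Ω : Multiset Fm} {N : Fm} :
      N.isNeg → (∀ F ∈ Ω, F.isNeutral) →
      FDer (N ::ₘ Ω) none → FDer Ω (some N)
  | par {Γ : Multiset Fm} {A B : Fm} :
      FDer (A ::ₘ B ::ₘ Γ) none → FDer (Fm.par A B ::ₘ Γ) none
  | bot {Γ : Multiset Fm} : FDer Γ none → FDer (Fm.bot ::ₘ Γ) none
  | decide {Ω : Multiset Fm} {P : Fm} :
      P.isPos → (∀ F ∈ Ω, F.isNeutral) →
      FDer Ω (some P) → FDer (P ::ₘ Ω) none
  | ldecide {Ω : Multiset Fm} {u : Lbl} {A : Fm} :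
      u ≠ Lbl.inf → (∀ F ∈ Ω, F.isNeutral) →
      FDer Ω (some A) → FDer (Fm.qm u A ::ₘ Ω) none
  | udecide {Ω : Multiset Fm} {A : Fm} :
      (∀ F ∈ Ω, F.isNeutral) →
      FDer (Fm.qm Lbl.inf A ::ₘ Ω) (some A) →
      FDer (Fm.qm Lbl.inf A ::ₘ Ω) none

/-! ## Two-register Minsky machines -/

/-- The instruction set of a two-register Minsky machine. -/
inductive Instr : Type
  | halt | incra | incrb | decra | decrb | isza | iszb
deriving DecidableEq

/-- A configuration `⟨q, v⟩`: a state (states are names by natural numbers,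
with `0` the distinguished halting state `*`) together with the values
`v(a)` and `v(b)` of the two registers. -/
structure Cfg : Type where
  q : ℕ
  a : ℕ
  b : ℕ
deriving DecidableEq

/-- A two-register Minsky machine is presented by its finite labelled transition
table: a finite list of (source state, instruction, target state) triples. -/
abbrev Prog : Type := List (ℕ × Instr × ℕ)

/-- The labelled transition relation between configurations generated by the
table `P`, following the seven schemas (the halting state is `0`). -/
inductive Step (P : Prog) : Cfg → Instr → Cfg → Prop
  | halt {q m n : ℕ} : (q, Instr.halt, 0) ∈ P → q ≠ 0 →
      Step P ⟨q, m, n⟩ Instr.halt ⟨0, 0, 0⟩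
  | incra {q r m n : ℕ} : (q, Instr.incra, r) ∈ P → q ≠ r →
      Step P ⟨q, m, n⟩ Instr.incra ⟨r, m + 1, n⟩
  | incrb {q r m n : ℕ} : (q, Instr.incrb, r) ∈ P → q ≠ r →
      Step P ⟨q, m, n⟩ Instr.incrb ⟨r, m, n + 1⟩
  | decra {q r m n : ℕ} : (q, Instr.decra, r) ∈ P → q ≠ r →
      Step P ⟨q, m + 1, n⟩ Instr.decra ⟨r, m, n⟩
  | decrb {q r m n : ℕ} : (q, Instr.decrb, r) ∈ P → q ≠ r →
      Step P ⟨q, m, n + 1⟩ Instr.decrb ⟨r, m, n⟩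
  | isza {q r n : ℕ} : (q, Instr.isza, r) ∈ P → q ≠ r →
      Step P ⟨q, 0, n⟩ Instr.isza ⟨r, 0, n⟩
  | iszb {q r m : ℕ} : (q, Instr.iszb, r) ∈ P → q ≠ r →
      Step P ⟨q, m, 0⟩ Instr.iszb ⟨r, m, 0⟩

/-- The transition relation is deterministic. -/
def Deterministic (P : Prog) : Prop :=
  ∀ {c : Cfg} {i₁ i₂ : Instr} {d₁ d₂ : Cfg},
    Step P c i₁ d₁ → Step P c i₂ d₂ → i₁ = i₂ ∧ d₁ = d₂

/-- Every entry of the table generates transitions fitting one of the seven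
schemas: halt entries target the halting state `0` and have non-halting source,
and the other entries have distinct source and target states. -/
def WellFormed (P : Prog) : Prop :=
  ∀ e ∈ P, (e.2.1 = Instr.halt → e.2.2 = 0 ∧ e.1 ≠ 0) ∧
           (e.2.1 ≠ Instr.halt → e.1 ≠ e.2.2)

/-- The machine halts from `c₀` if some finite sequence of transitions leads
from `c₀` to the halting configuration `⟨*, {a:0, b:0}⟩`. -/
def Halts (P : Prog) (c₀ : Cfg) : Prop :=
  Relation.ReflTransGen (fun c d => ∃ i, Step P c i d) c₀ ⟨0, 0, 0⟩

/-! ## The encoding -/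

/-- The atom `r_a`. -/
def raA : Fm := Fm.atom 0
/-- The atom `r_b`. -/
def rbA : Fm := Fm.atom 1
/-- The atom `h`. -/
def hA : Fm := Fm.atom 2
/-- The negated atom `¬r_a`. -/
def nRa : Fm := Fm.natom 0
/-- The negated atom `¬r_b`. -/
def nRb : Fm := Fm.natom 1
/-- The negated atom `¬h`. -/
def nH : Fm := Fm.natom 2
/-- The atom for state `q` (distinct from `r_a`, `r_b`, `h`). -/
def stA (q : ℕ) : Fm := Fm.atom (q + 3)
/-- The negated atom `¬q` for state `q`. -/
def nSt (q : ℕ) : Fm := Fm.natom (q + 3)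
/-- The formula `?^a ¬r_a`. -/
def qa : Fm := Fm.qm Lbl.la nRa
/-- The formula `?^b ¬r_b`. -/
def qb : Fm := Fm.qm Lbl.lb nRb

/-- The formulas encoding one entry of the transition table. -/
def encInstr : ℕ × Instr × ℕ → Multiset Fm
  | (q, Instr.halt, _) =>
      {Fm.tens (stA q) nH,
       Fm.tens (Fm.tens hA (Fm.bang Lbl.la raA)) nH,
       Fm.tens (Fm.tens hA (Fm.bang Lbl.lb rbA)) nH,
       Fm.tens hA (Fm.bang Lbl.inf Fm.one)}
  | (q, Instr.incra, r) => {Fm.tens (stA q) (Fm.par (nSt r) qa)}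
  | (q, Instr.incrb, r) => {Fm.tens (stA q) (Fm.par (nSt r) qb)}
  | (q, Instr.decra, r) => {Fm.tens (Fm.tens (stA q) (Fm.bang Lbl.la raA)) (nSt r)}
  | (q, Instr.decrb, r) => {Fm.tens (Fm.tens (stA q) (Fm.bang Lbl.lb rbA)) (nSt r)}
  | (q, Instr.isza, r) => {Fm.tens (stA q) (Fm.bang Lbl.lb (nSt r))}
  | (q, Instr.iszb, r) => {Fm.tens (stA q) (Fm.bang Lbl.la (nSt r))}

/-- The context `Π` encoding the transition relation of the machine `P`. -/
def PiCtx (P : Prog) : Multiset Fm := (P.map encInstr).sum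

/-- `?^∞ Γ`: each element of `Γ` prefixed by `?^∞`. -/
def qmInf (Γ : Multiset Fm) : Multiset Fm := Γ.map (Fm.qm Lbl.inf)

/-- The encoding `⟨c⟩` of a configuration: `v(a)` copies of `?^a ¬r_a`,
`v(b)` copies of `?^b ¬r_b`, and `¬q`. -/
def encCfg (c : Cfg) : Multiset Fm :=
  Multiset.replicate c.a qa + Multiset.replicate c.b qb + {nSt c.q}

/-- The sequent `⊢ ?^∞Π, ⟨c⟩` encoding the halting problem from `c`. -/
def encSeq (P : Prog) (c : Cfg) : Multiset Fm := qmInf (PiCtx P) + encCfg c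

/-! ## Concrete Gödel encodings -/

/-- Gödel code of a label. -/
def Lbl.code : Lbl → ℕ
  | .inf => 0 | .la => 1 | .lb => 2

/-- A concrete (effective) Gödel encoding of formulas. -/
def Fm.code : Fm → ℕ
  | .atom p => Nat.pair 0 p
  | .natom p => Nat.pair 1 p
  | .tens A B => Nat.pair 2 (Nat.pair A.code B.code)
  | .one => Nat.pair 3 0
  | .par A B => Nat.pair 4 (Nat.pair A.code B.code)
  | .bot => Nat.pair 5 0
  | .bang u A => Nat.pair 6 (Nat.pair u.code A.code)
  | .qm u A => Nat.pair 7 (Nat.pair u.code A.code)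

/-- Gödel code of a list of natural numbers. -/
def codeList : List ℕ → ℕ
  | [] => 0
  | x :: l => Nat.pair x (codeList l) + 1

/-- A concrete (effective) Gödel encoding of finite multisets of formulas
(a sequent is coded by the sorted list of the codes of its elements). -/
def codeSeq (Γ : Multiset Fm) : ℕ :=
  codeList ((Γ.map Fm.code).sort (· ≤ ·))

/-- Gödel code of an instruction. -/
def Instr.code : Instr → ℕ
  | .halt => 0 | .incra => 1 | .incrb => 2 | .decra => 3
  | .decrb => 4 | .isza => 5 | .iszb => 6

/-- A concrete (effective) Gödel encoding of machines. -/
def codeProg (P : Prog) : ℕ :=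
  codeList (P.map fun e => Nat.pair e.1 (Nat.pair e.2.1.code e.2.2))

/-- A concrete (effective) Gödel encoding of configurations. -/
def codeCfg (c : Cfg) : ℕ := Nat.pair c.q (Nat.pair c.a c.b)



/-! ## Auxiliary development for Statement 13 -/

/-- A Type-valued mirror of the focused calculus, used to measure proof height. -/
inductive FDerT : Multiset Fm → Option Fm → Type
  | finit {Θ : Multiset Fm} (p : ℕ) :
      (∀ F ∈ Θ, ∃ B, F = Fm.qm Lbl.inf B) →
      FDerT (Fm.natom p ::ₘ Θ) (some (Fm.atom p))
  | ftens {Θ Ω₁ Ω₂ : Multiset Fm} {B C : Fm} :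
      (∀ F ∈ Θ, ∃ A, F = Fm.qm Lbl.inf A) →
      (∀ F ∈ Ω₁, F.isNeutral) → (∀ F ∈ Ω₂, F.isNeutral) →
      FDerT (Θ + Ω₁) (some B) → FDerT (Θ + Ω₂) (some C) →
      FDerT (Θ + Ω₁ + Ω₂) (some (Fm.tens B C))
  | fone {Θ : Multiset Fm} :
      (∀ F ∈ Θ, ∃ B, F = Fm.qm Lbl.inf B) → FDerT Θ (some Fm.one)
  | fbang {Γ Δ : Multiset Fm} {u : Lbl} {C : Fm} :
      (∀ F ∈ Γ, ∃ v B, F = Fm.qm v B ∧ Lbl.le u v) →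
      (∀ F ∈ Δ, ∃ B, F = Fm.qm Lbl.inf B) →
      FDerT (C ::ₘ Γ) none → FDerT (Γ + Δ) (some (Fm.bang u C))
  | blur {Ω : Multiset Fm} {N : Fm} :
      N.isNeg → (∀ F ∈ Ω, F.isNeutral) →
      FDerT (N ::ₘ Ω) none → FDerT Ω (some N)
  | par {Γ : Multiset Fm} {A B : Fm} :
      FDerT (A ::ₘ B ::ₘ Γ) none → FDerT (Fm.par A B ::ₘ Γ) none
  | bot {Γ : Multiset Fm} : FDerT Γ none → FDerT (Fm.bot ::ₘ Γ) none
  | decide {Ω : Multiset Fm} {P : Fm} :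
      P.isPos → (∀ F ∈ Ω, F.isNeutral) →
      FDerT Ω (some P) → FDerT (P ::ₘ Ω) none
  | ldecide {Ω : Multiset Fm} {u : Lbl} {A : Fm} :
      u ≠ Lbl.inf → (∀ F ∈ Ω, F.isNeutral) →
      FDerT Ω (some A) → FDerT (Fm.qm u A ::ₘ Ω) none
  | udecide {Ω : Multiset Fm} {A : Fm} :
      (∀ F ∈ Ω, F.isNeutral) →
      FDerT (Fm.qm Lbl.inf A ::ₘ Ω) (some A) →
      FDerT (Fm.qm Lbl.inf A ::ₘ Ω) none

/-- Height of a derivation. -/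
def ht : ∀ {Γ o}, FDerT Γ o → ℕ
  | _, _, .finit _ _ => 0
  | _, _, .ftens _ _ _ d₁ d₂ => max (ht d₁) (ht d₂) + 1
  | _, _, .fone _ => 0
  | _, _, .fbang _ _ d => ht d + 1
  | _, _, .blur _ _ d => ht d + 1
  | _, _, .par d => ht d + 1
  | _, _, .bot d => ht d + 1
  | _, _, .decide _ _ d => ht d + 1
  | _, _, .ldecide _ _ d => ht d + 1
  | _, _, .udecide _ d => ht d + 1

@[simp] lemma ht_ftens {Θ Ω₁ Ω₂ B C h1 h2 h3} (d₁ : FDerT (Θ + Ω₁) (some B))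
    (d₂ : FDerT (Θ + Ω₂) (some C)) :
    ht (.ftens h1 h2 h3 d₁ d₂) = max (ht d₁) (ht d₂) + 1 := rfl
@[simp] lemma ht_fbang {Γ Δ u C h1 h2} (d : FDerT (C ::ₘ Γ) none) :
    ht (@FDerT.fbang Γ Δ u C h1 h2 d) = ht d + 1 := rfl
@[simp] lemma ht_blur {Ω N hn hΩ} (d : FDerT (N ::ₘ Ω) none) :
    ht (@FDerT.blur Ω N hn hΩ d) = ht d + 1 := rfl
@[simp] lemma ht_par {Γ A B} (d : FDerT (A ::ₘ B ::ₘ Γ) none) :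
    ht (@FDerT.par Γ A B d) = ht d + 1 := rfl
@[simp] lemma ht_bot {Γ} (d : FDerT Γ none) : ht (@FDerT.bot Γ d) = ht d + 1 := rfl
@[simp] lemma ht_decide {Ω P h1 h2} (d : FDerT Ω (some P)) :
    ht (@FDerT.decide Ω P h1 h2 d) = ht d + 1 := rfl
@[simp] lemma ht_ldecide {Ω u A h1 h2} (d : FDerT Ω (some A)) :
    ht (@FDerT.ldecide Ω u A h1 h2 d) = ht d + 1 := rfl
@[simp] lemma ht_udecide {Ω A h1} (d : FDerT (Fm.qm Lbl.inf A ::ₘ Ω) (some A)) :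
    ht (@FDerT.udecide Ω A h1 d) = ht d + 1 := rfl

lemma toT {Γ o} (h : FDer Γ o) : Nonempty (FDerT Γ o) := by
  induction h with
  | finit p h => exact ⟨.finit p h⟩
  | ftens h1 h2 h3 _ _ ih1 ih2 =>
      exact ih1.elim fun d1 => ih2.elim fun d2 => ⟨.ftens h1 h2 h3 d1 d2⟩
  | fone h => exact ⟨.fone h⟩
  | fbang h1 h2 _ ih => exact ih.elim fun d => ⟨.fbang h1 h2 d⟩
  | blur h1 h2 _ ih => exact ih.elim fun d => ⟨.blur h1 h2 d⟩
  | par _ ih => exact ih.elim fun d => ⟨.par d⟩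
  | bot _ ih => exact ih.elim fun d => ⟨.bot d⟩
  | decide h1 h2 _ ih => exact ih.elim fun d => ⟨.decide h1 h2 d⟩
  | ldecide h1 h2 _ ih => exact ih.elim fun d => ⟨.ldecide h1 h2 d⟩
  | udecide h1 _ ih => exact ih.elim fun d => ⟨.udecide h1 d⟩

/-- Abbreviation: every member is a `?^∞` formula. -/
def AllInf (X : Multiset Fm) : Prop := ∀ F ∈ X, ∃ B, F = Fm.qm Lbl.inf B

lemma mem_piCtx {M : Prog} {F : Fm} : F ∈ PiCtx M ↔ ∃ e ∈ M, F ∈ encInstr e := by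
  induction M with
  | nil => simp [PiCtx]
  | cons e M ih =>
      simp only [PiCtx, List.map_cons, List.sum_cons, Multiset.mem_add] at *
      constructor
      · rintro (h | h)
        · exact ⟨e, by simp, h⟩
        · obtain ⟨e', he', hF⟩ := ih.1 h
          exact ⟨e', by simp [he'], hF⟩
      · rintro ⟨e', he', hF⟩
        rcases List.mem_cons.1 he' with rfl | he'
        · exact Or.inl hF
        · exact Or.inr (ih.2 ⟨e', he', hF⟩)

lemma cz {X : Multiset Fm} {P : Fm → Prop} (h : ∀ F ∈ X, P F) {f : Fm} (hf : ¬ P f) :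
    Multiset.count f X = 0 :=
  Multiset.count_eq_zero.2 fun hm => hf (h f hm)

lemma ceq {X Y : Multiset Fm} (h : X = Y) (f : Fm) :
    Multiset.count f X = Multiset.count f Y := by rw [h]

/- not-`?^∞` facts -/
lemma notInf_qmla (A : Fm) : ∀ B, Fm.qm Lbl.la A ≠ Fm.qm Lbl.inf B := by intro B; simp
lemma notInf_qmlb (A : Fm) : ∀ B, Fm.qm Lbl.lb A ≠ Fm.qm Lbl.inf B := by intro B; simp
lemma notInf_natom (t : ℕ) : ∀ B, Fm.natom t ≠ Fm.qm Lbl.inf B := by intro B; simp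
lemma notInf_atom (t : ℕ) : ∀ B, Fm.atom t ≠ Fm.qm Lbl.inf B := by intro B; simp

lemma czInf {X : Multiset Fm} (h : AllInf X) {f : Fm} (hf : ∀ B, f ≠ Fm.qm Lbl.inf B) :
    Multiset.count f X = 0 :=
  cz h (by rintro ⟨B, rfl⟩; exact hf B rfl)

/-! ### Inversion lemmas -/

lemma inv_atom {C : Multiset Fm} {p : ℕ} (d : FDerT C (some (Fm.atom p))) :
    ∃ Θ, C = Fm.natom p ::ₘ Θ ∧ AllInf Θ := by
  cases d with
  | finit p h => exact ⟨_, rfl, h⟩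
  | blur hn => simp [Fm.isNeg] at hn

lemma focus_atom_mem {C : Multiset Fm} {p : ℕ} (d : FDerT C (some (Fm.atom p))) :
    Fm.natom p ∈ C := by
  obtain ⟨Θ, rfl, -⟩ := inv_atom d; exact Multiset.mem_cons_self _ _

lemma inv_tens {C : Multiset Fm} {X Y : Fm} (d : FDerT C (some (Fm.tens X Y))) :
    ∃ Θ Ω₁ Ω₂, C = Θ + Ω₁ + Ω₂ ∧ AllInf Θ ∧
      (∃ d₁ : FDerT (Θ + Ω₁) (some X), ht d₁ < ht d) ∧
      (∃ d₂ : FDerT (Θ + Ω₂) (some Y), ht d₂ < ht d) := by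
  cases d with
  | ftens h1 h2 h3 d1 d2 =>
      exact ⟨_, _, _, rfl, h1,
        ⟨d1, by simp⟩, ⟨d2, by simp⟩⟩
  | blur hn => simp [Fm.isNeg] at hn

lemma inv_bang {C : Multiset Fm} {u : Lbl} {A : Fm} (d : FDerT C (some (Fm.bang u A))) :
    ∃ Γb Δb, C = Γb + Δb ∧ (∀ F ∈ Γb, ∃ v B, F = Fm.qm v B ∧ Lbl.le u v) ∧
      AllInf Δb ∧ ∃ d' : FDerT (A ::ₘ Γb) none, ht d' < ht d := by
  cases d with
  | fbang h1 h2 d' => exact ⟨_, _, rfl, h1, h2, d', by simp⟩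
  | blur hn => simp [Fm.isNeg] at hn

lemma inv_neg {C : Multiset Fm} {N : Fm} (hN : N.isNeg) (d : FDerT C (some N)) :
    ∃ d' : FDerT (N ::ₘ C) none, ht d' < ht d := by
  cases d with
  | blur _ _ d' => exact ⟨d', by simp⟩
  | finit p h => simp [Fm.isNeg] at hN
  | ftens => simp [Fm.isNeg] at hN
  | fone => simp [Fm.isNeg] at hN
  | fbang => simp [Fm.isNeg] at hN

lemma inv_par {A B : Fm} {Γ : Multiset Fm} (hΓ : ∀ F ∈ Γ, F.isNeutral)
    (d : FDerT (Fm.par A B ::ₘ Γ) none) :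
    ∃ d' : FDerT (A ::ₘ B ::ₘ Γ) none, ht d' < ht d := by
  generalize hC : Fm.par A B ::ₘ Γ = C at d
  cases d with
  | par d' =>
      rcases Multiset.cons_eq_cons.1 hC with ⟨h1, h2⟩ | ⟨-, cs, h1, h2⟩
      · injection h1 with e1 e2
        subst e1; subst e2; subst h2
        exact ⟨d', by simp⟩
      · have : Fm.par _ _ ∈ Γ := h1 ▸ Multiset.mem_cons_self _ _
        have := hΓ _ this
        simp [Fm.isNeutral] at this
  | bot d' =>
      rcases Multiset.cons_eq_cons.1 hC with ⟨h1, h2⟩ | ⟨-, cs, h1, h2⟩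
      · simp at h1
      · have : Fm.bot ∈ Γ := h1 ▸ Multiset.mem_cons_self _ _
        have := hΓ _ this
        simp [Fm.isNeutral] at this
  | decide hpos hΩ d' =>
      rcases Multiset.cons_eq_cons.1 hC with ⟨h1, h2⟩ | ⟨-, cs, h1, h2⟩
      · rw [← h1] at hpos; simp [Fm.isPos] at hpos
      · have : Fm.par A B ∈ _ := h2 ▸ Multiset.mem_cons_self _ _
        have := hΩ _ this
        simp [Fm.isNeutral] at this
  | ldecide hu hΩ d' =>
      rcases Multiset.cons_eq_cons.1 hC with ⟨h1, h2⟩ | ⟨-, cs, h1, h2⟩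
      · simp at h1
      · have : Fm.par A B ∈ _ := h2 ▸ Multiset.mem_cons_self _ _
        have := hΩ _ this
        simp [Fm.isNeutral] at this
  | udecide hΩ d' =>
      rcases Multiset.cons_eq_cons.1 hC with ⟨h1, h2⟩ | ⟨-, cs, h1, h2⟩
      · simp at h1
      · have : Fm.par A B ∈ _ := h2 ▸ Multiset.mem_cons_self _ _
        have := hΩ _ this
        simp [Fm.isNeutral] at this

/-! ### Counting helpers -/

lemma count_outer {Θ Ω₁ Ω₂ : Multiset Fm} (hΘ : AllInf Θ) {f : Fm}
    (hf : ∀ B, f ≠ Fm.qm Lbl.inf B) :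
    Multiset.count f (Θ + Ω₁ + Ω₂) =
      Multiset.count f (Θ + Ω₁) + Multiset.count f (Θ + Ω₂) := by
  have z : Multiset.count f Θ = 0 := czInf hΘ hf
  simp [Multiset.count_add, z]

lemma count_finit_branch {X Θ₁ : Multiset Fm} {g : Fm}
    (h1 : X = g ::ₘ Θ₁) (hΘ₁ : AllInf Θ₁) {f : Fm}
    (hf : ∀ B, f ≠ Fm.qm Lbl.inf B) :
    Multiset.count f X = if f = g then 1 else 0 := by
  have e1 := ceq h1 f
  have z : Multiset.count f Θ₁ = 0 := czInf hΘ₁ hf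
  rw [Multiset.count_cons, z] at e1
  omega

lemma count_bang_branch {X Γb Δb : Multiset Fm}
    (h2 : X = Γb + Δb) (hΔb : AllInf Δb) {f : Fm}
    (hf : ∀ B, f ≠ Fm.qm Lbl.inf B) :
    Multiset.count f X = Multiset.count f Γb := by
  have e1 := ceq h2 f
  have z : Multiset.count f Δb = 0 := czInf hΔb hf
  rw [Multiset.count_add, z] at e1
  omega

lemma count_mem_ne {f g : Fm} {X : Multiset Fm} (h : f ≠ g) :
    Multiset.count f (g ::ₘ X) = Multiset.count f X := by
  rw [Multiset.count_cons_of_ne h]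



/-! ### Shape predicates and the four invariant claims -/

/-- Shapes allowed in configuration-like contexts, with designated natom `t`. -/
def Ok (M : Prog) (t : ℕ) (F : Fm) : Prop :=
  (∃ B ∈ PiCtx M, F = Fm.qm Lbl.inf B) ∨
    F = Fm.qm Lbl.la (Fm.natom 0) ∨ F = Fm.qm Lbl.lb (Fm.natom 1) ∨
    F = Fm.natom 0 ∨ F = Fm.natom 1 ∨ F = Fm.atom 0 ∨ F = Fm.atom 1 ∨ F = Fm.natom t

/-- Shapes allowed in `!^a` promotion contexts. -/
def OkA (M : Prog) (F : Fm) : Prop :=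
  (∃ B ∈ PiCtx M, F = Fm.qm Lbl.inf B) ∨
    F = Fm.qm Lbl.la (Fm.natom 0) ∨ F = Fm.natom 0 ∨ F = Fm.atom 0

/-- Shapes allowed in `!^b` promotion contexts. -/
def OkB (M : Prog) (F : Fm) : Prop :=
  (∃ B ∈ PiCtx M, F = Fm.qm Lbl.inf B) ∨
    F = Fm.qm Lbl.lb (Fm.natom 1) ∨ F = Fm.natom 1 ∨ F = Fm.atom 1

lemma Ok.neutral {M t F} (h : Ok M t F) : F.isNeutral := by
  rcases h with ⟨B, -, rfl⟩ | rfl | rfl | rfl | rfl | rfl | rfl | rfl <;> simp [Fm.isNeutral]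

lemma OkA.neutral {M F} (h : OkA M F) : F.isNeutral := by
  rcases h with ⟨B, -, rfl⟩ | rfl | rfl | rfl <;> simp [Fm.isNeutral]

lemma OkB.neutral {M F} (h : OkB M F) : F.isNeutral := by
  rcases h with ⟨B, -, rfl⟩ | rfl | rfl | rfl <;> simp [Fm.isNeutral]

lemma Ok.natom_cases {M t s} (h : Ok M t (Fm.natom s)) : s = 0 ∨ s = 1 ∨ s = t := by
  rcases h with ⟨B, -, hB⟩ | hB | hB | hB | hB | hB | hB | hB <;> simp_all

lemma OkA.natom_le {M s} (h : OkA M (Fm.natom s)) : s ≤ 1 := by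
  rcases h with ⟨B, -, hB⟩ | hB | hB | hB <;> simp_all

lemma OkB.natom_le {M s} (h : OkB M (Fm.natom s)) : s ≤ 1 := by
  rcases h with ⟨B, -, hB⟩ | hB | hB | hB <;> simp_all

lemma Ok.qm_cases {M t u A} (h : Ok M t (Fm.qm u A)) :
    (u = Lbl.inf ∧ A ∈ PiCtx M) ∨ (u = Lbl.la ∧ A = Fm.natom 0) ∨
      (u = Lbl.lb ∧ A = Fm.natom 1) := by
  rcases h with ⟨B, hB, hB2⟩ | hB | hB | hB | hB | hB | hB | hB <;> simp_all

lemma OkA.qm_cases {M u A} (h : OkA M (Fm.qm u A)) :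
    (u = Lbl.inf ∧ A ∈ PiCtx M) ∨ (u = Lbl.la ∧ A = Fm.natom 0) := by
  rcases h with ⟨B, hB, hB2⟩ | hB | hB | hB <;> simp_all

lemma OkB.qm_cases {M u A} (h : OkB M (Fm.qm u A)) :
    (u = Lbl.inf ∧ A ∈ PiCtx M) ∨ (u = Lbl.lb ∧ A = Fm.natom 1) := by
  rcases h with ⟨B, hB, hB2⟩ | hB | hB | hB <;> simp_all

lemma Ok.retarget {M t t' F} (h : Ok M t F) (hne : F ≠ Fm.natom t) : Ok M t' F := by
  rcases h with h | h | h | h | h | h | h | h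
  · exact Or.inl h
  · exact Or.inr (Or.inl h)
  · exact Or.inr (Or.inr (Or.inl h))
  · exact Or.inr (Or.inr (Or.inr (Or.inl h)))
  · exact Or.inr (Or.inr (Or.inr (Or.inr (Or.inl h))))
  · exact Or.inr (Or.inr (Or.inr (Or.inr (Or.inr (Or.inl h)))))
  · exact Or.inr (Or.inr (Or.inr (Or.inr (Or.inr (Or.inr (Or.inl h))))))
  · exact absurd h hne

lemma mem_sub_left {F : Fm} {X Y : Multiset Fm} (h : F ∈ X) : F ∈ X + Y :=
  Multiset.mem_add.2 (Or.inl h)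

lemma mem_sub_right {F : Fm} {X Y : Multiset Fm} (h : F ∈ Y) : F ∈ X + Y :=
  Multiset.mem_add.2 (Or.inr h)

lemma mem_of_mem_right {X Y Z : Multiset Fm} {F : Fm} (h : F ∈ X + Z) : F ∈ X + Y + Z := by
  rcases Multiset.mem_add.1 h with h | h
  · exact mem_sub_left (mem_sub_left h)
  · exact mem_sub_right h

/-- `I`-claim: a derivable configuration context yields halting. -/
def Icl (M : Prog) (C : Multiset Fm) : Prop :=
  ∀ q : ℕ, (∀ F ∈ C, Ok M (q+3) F) →
    Multiset.count (Fm.atom 0) C = 0 → Multiset.count (Fm.atom 1) C = 0 →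
    Multiset.count (Fm.natom (q+3)) C = 1 →
    Multiset.count (Fm.natom 0) C = 0 ∧ Multiset.count (Fm.natom 1) C = 0 ∧
      Halts M ⟨q, Multiset.count (Fm.qm Lbl.la (Fm.natom 0)) C,
                  Multiset.count (Fm.qm Lbl.lb (Fm.natom 1)) C⟩

/-- `H`-claim: a derivable halting-phase context has no loose `¬r` atoms. -/
def Hcl (M : Prog) (C : Multiset Fm) : Prop :=
  (∀ F ∈ C, Ok M 2 F) →
    Multiset.count (Fm.atom 0) C = 0 → Multiset.count (Fm.atom 1) C = 0 →
    Multiset.count (Fm.natom 0) C = 0 ∧ Multiset.count (Fm.natom 1) C = 0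

/-- `A`-claim: a derivable `!^a` promotion context consumes exactly one `?^a¬r_a`. -/
def Acl (M : Prog) (C : Multiset Fm) : Prop :=
  (∀ F ∈ C, OkA M F) →
    Multiset.count (Fm.qm Lbl.la (Fm.natom 0)) C + Multiset.count (Fm.natom 0) C = 1

/-- `B`-claim. -/
def Bcl (M : Prog) (C : Multiset Fm) : Prop :=
  (∀ F ∈ C, OkB M F) →
    Multiset.count (Fm.qm Lbl.lb (Fm.natom 1)) C + Multiset.count (Fm.natom 1) C = 1

/-! ### Dead-end lemmas -/

lemma tens_atom_dead {M : Prog} {t k : ℕ} {Y : Fm} {C : Multiset Fm}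
    (hOk : ∀ F ∈ C, Ok M t F)
    (d : FDerT C (some (Fm.tens (Fm.atom k) Y)))
    (h0 : k ≠ 0) (h1 : k ≠ 1) (hkt : k ≠ t) : False := by
  obtain ⟨Θ, Ω₁, Ω₂, hCeq, -, ⟨d₁, -⟩, -⟩ := inv_tens d
  have hm : Fm.natom k ∈ C := by rw [hCeq]; exact mem_sub_left (focus_atom_mem d₁)
  rcases Ok.natom_cases (hOk _ hm) with h | h | h <;> omega

lemma stuck_focus {M : Prog} {C : Multiset Fm} {A : Fm} (hApi : A ∈ PiCtx M)
    (hC : ∀ s, Fm.natom s ∈ C → s ≤ 1) (d : FDerT C (some A)) : False := by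
  have kill1 : ∀ {X : Multiset Fm} {Y : Fm} {k : ℕ},
      FDerT X (some (Fm.tens (Fm.atom k) Y)) → (∀ F ∈ X, F ∈ C) → k ≠ 0 → k ≠ 1 → False := by
    intro X Y k d' hsub h0 h1
    obtain ⟨Θ, Ω₁, Ω₂, hCeq, -, ⟨d₁, -⟩, -⟩ := inv_tens d'
    have hm : Fm.natom k ∈ X := by rw [hCeq]; exact mem_sub_left (focus_atom_mem d₁)
    have := hC _ (hsub _ hm); omega
  have hid : ∀ F ∈ C, F ∈ C := fun _ h => h
  obtain ⟨e, heM, hAe⟩ := mem_piCtx.1 hApi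
  obtain ⟨s, i, r⟩ := e
  cases i <;> simp [encInstr, stA, nSt, Msel.hA, nH, qa, qb, raA, rbA, nRa, nRb] at hAe
  case halt =>
    rcases hAe with rfl | rfl | rfl | rfl
    · exact kill1 d hid (by omega) (by omega)
    · obtain ⟨Θ, Ω₁, Ω₂, hCeq, -, ⟨d₁, -⟩, -⟩ := inv_tens d
      exact kill1 d₁ (fun F hF => hCeq ▸ mem_sub_left hF) (by omega) (by omega)
    · obtain ⟨Θ, Ω₁, Ω₂, hCeq, -, ⟨d₁, -⟩, -⟩ := inv_tens d
      exact kill1 d₁ (fun F hF => hCeq ▸ mem_sub_left hF) (by omega) (by omega)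
    · exact kill1 d hid (by omega) (by omega)
  case incra => subst hAe; exact kill1 d hid (by omega) (by omega)
  case incrb => subst hAe; exact kill1 d hid (by omega) (by omega)
  case decra =>
    subst hAe
    obtain ⟨Θ, Ω₁, Ω₂, hCeq, -, ⟨d₁, -⟩, -⟩ := inv_tens d
    exact kill1 d₁ (fun F hF => hCeq ▸ mem_sub_left hF) (by omega) (by omega)
  case decrb =>
    subst hAe
    obtain ⟨Θ, Ω₁, Ω₂, hCeq, -, ⟨d₁, -⟩, -⟩ := inv_tens d
    exact kill1 d₁ (fun F hF => hCeq ▸ mem_sub_left hF) (by omega) (by omega)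
  case isza => subst hAe; exact kill1 d hid (by omega) (by omega)
  case iszb => subst hAe; exact kill1 d hid (by omega) (by omega)

/-! ### More counting helpers -/

lemma count_finit_ne {X Θ₁ : Multiset Fm} {g f : Fm}
    (h1 : X = g ::ₘ Θ₁) (hΘ₁ : AllInf Θ₁)
    (hf : ∀ B, f ≠ Fm.qm Lbl.inf B) (hne : f ≠ g) :
    Multiset.count f X = 0 := by
  rw [h1, Multiset.count_cons_of_ne hne, czInf hΘ₁ hf]

lemma count_finit_self {X Θ₁ : Multiset Fm} {g : Fm}
    (h1 : X = g ::ₘ Θ₁) (hΘ₁ : AllInf Θ₁)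
    (hg : ∀ B, g ≠ Fm.qm Lbl.inf B) :
    Multiset.count g X = 1 := by
  rw [h1, Multiset.count_cons_self, czInf hΘ₁ hg]


lemma natom_ne {a b : ℕ} (h : a ≠ b) : Fm.natom a ≠ Fm.natom b := by simp [h]

theorem core (M : Prog) (hwf : WellFormed M) :
    ∀ N : ℕ, ∀ C : Multiset Fm, ∀ d : FDerT C none, ht d ≤ N →
      Icl M C ∧ Hcl M C ∧ Acl M C ∧ Bcl M C := by
  intro N
  induction N using Nat.strong_induction_on with
  | _ N IH =>
  intro C d hd
  have IHa : ∀ (C' : Multiset Fm) (d' : FDerT C' none), ht d' < ht d →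
      Icl M C' ∧ Hcl M C' ∧ Acl M C' ∧ Bcl M C' := fun C' d' h =>
    IH (ht d') (by omega) C' d' le_rfl
  refine ⟨?_, ?_, ?_, ?_⟩
  -- ================= I-claim =================
  · intro q hOk hra hrb hone
    cases d with
    | par d' =>
        exact absurd (Ok.neutral (hOk _ (Multiset.mem_cons_self _ _))) (by simp [Fm.isNeutral])
    | bot d' =>
        exact absurd (Ok.neutral (hOk _ (Multiset.mem_cons_self _ _))) (by simp [Fm.isNeutral])
    | decide hpos hΩn prem =>
        rcases hOk _ (Multiset.mem_cons_self _ _) with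
          ⟨B, -, rfl⟩ | rfl | rfl | rfl | rfl | rfl | rfl | rfl
        · simp [Fm.isPos] at hpos
        · simp [Fm.isPos] at hpos
        · simp [Fm.isPos] at hpos
        · simp [Fm.isPos] at hpos
        · simp [Fm.isPos] at hpos
        · rw [Multiset.count_cons_self] at hra; omega
        · rw [Multiset.count_cons_self] at hrb; omega
        · simp [Fm.isPos] at hpos
    | ldecide hu hΩn prem =>
        rcases Ok.qm_cases (hOk _ (Multiset.mem_cons_self _ _)) with
          ⟨h1, -⟩ | ⟨rfl, rfl⟩ | ⟨rfl, rfl⟩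
        · exact absurd h1 hu
        · obtain ⟨d'', hlt⟩ := inv_neg (by simp [Fm.isNeg]) prem
          have hI := (IHa _ d'' (by simp; omega)).1 q (fun F hF => by
              rcases Multiset.mem_cons.1 hF with rfl | hF
              · exact Or.inr (Or.inr (Or.inr (Or.inl rfl)))
              · exact hOk _ (Multiset.mem_cons_of_mem hF))
            (by rw [Multiset.count_cons_of_ne (by simp)]
                rw [Multiset.count_cons_of_ne (by simp)] at hra; exact hra)
            (by rw [Multiset.count_cons_of_ne (by simp)]
                rw [Multiset.count_cons_of_ne (by simp)] at hrb; exact hrb)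
            (by rw [Multiset.count_cons_of_ne (natom_ne (by omega))]
                rw [Multiset.count_cons_of_ne (by simp)] at hone; exact hone)
          rw [Multiset.count_cons_self] at hI
          exact absurd hI.1 (by omega)
        · obtain ⟨d'', hlt⟩ := inv_neg (by simp [Fm.isNeg]) prem
          have hI := (IHa _ d'' (by simp; omega)).1 q (fun F hF => by
              rcases Multiset.mem_cons.1 hF with rfl | hF
              · exact Or.inr (Or.inr (Or.inr (Or.inr (Or.inl rfl))))
              · exact hOk _ (Multiset.mem_cons_of_mem hF))
            (by rw [Multiset.count_cons_of_ne (by simp)]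
                rw [Multiset.count_cons_of_ne (by simp)] at hra; exact hra)
            (by rw [Multiset.count_cons_of_ne (by simp)]
                rw [Multiset.count_cons_of_ne (by simp)] at hrb; exact hrb)
            (by rw [Multiset.count_cons_of_ne (natom_ne (by omega))]
                rw [Multiset.count_cons_of_ne (by simp)] at hone; exact hone)
          rw [Multiset.count_cons_self] at hI
          exact absurd hI.2.1 (by omega)
    | udecide hΩn prem =>
        rcases Ok.qm_cases (hOk _ (Multiset.mem_cons_self _ _)) with
          ⟨-, hpi⟩ | ⟨h1, -⟩ | ⟨h1, -⟩
        · obtain ⟨e, heM, hAe⟩ := mem_piCtx.1 hpi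
          obtain ⟨s, i, r⟩ := e
          cases i <;> simp [encInstr, stA, nSt, Msel.hA, nH, qa, qb, raA, rbA, nRa, nRb] at hAe
          case halt =>
            obtain ⟨hr0, hs0⟩ := (hwf _ heM).1 rfl
            subst hr0
            rcases hAe with rfl | rfl | rfl | rfl
            · -- q ⊗ ¬h : a halting step
              obtain ⟨Θ, Ω₁, Ω₂, hCeq, hΘ, ⟨d₁, hh₁⟩, ⟨d₂, hh₂⟩⟩ := inv_tens prem
              obtain ⟨Θ₁, h1, hΘ₁⟩ := inv_atom d₁
              have hm0 : Fm.natom (s+3) ∈ Θ + Ω₁ := by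
                rw [h1]; exact Multiset.mem_cons_self _ _
              have hm := hOk (Fm.natom (s+3)) (by rw [hCeq]; exact mem_sub_left hm0)
              have hsq : q = s := by
                rcases Ok.natom_cases hm with h | h | h <;> omega
              subst hsq
              rw [hCeq] at hOk hra hrb hone ⊢
              have K : ∀ f : Fm, (∀ B, f ≠ Fm.qm Lbl.inf B) →
                  Multiset.count f (Θ + Ω₁ + Ω₂) =
                    (if f = Fm.natom (q + 3) then 1 else 0) + Multiset.count f (Θ + Ω₂) := by
                intro f hf
                have zΘ := czInf hΘ hf
                have zΘ₁ := czInf hΘ₁ hf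
                have a4 := ceq h1 f
                rw [Multiset.count_cons] at a4
                simp only [Multiset.count_add] at a4 ⊢
                split_ifs at a4 ⊢ with h <;> omega
              have ka0 := K _ (notInf_atom 0); rw [if_neg (by simp)] at ka0
              have ka1 := K _ (notInf_atom 1); rw [if_neg (by simp)] at ka1
              have kn0 := K _ (notInf_natom 0); rw [if_neg (natom_ne (by omega))] at kn0
              have kn1 := K _ (notInf_natom 1); rw [if_neg (natom_ne (by omega))] at kn1
              have knq := K _ (notInf_natom (q+3)); rw [if_pos rfl] at knq
              have hOkW : ∀ F ∈ Θ + Ω₂, Ok M (q+3) F := fun F hF => hOk _ (mem_of_mem_right hF)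
              have wq0 : Multiset.count (Fm.natom (q+3)) (Θ + Ω₂) = 0 := by omega
              have hneW : ∀ F ∈ Θ + Ω₂, F ≠ Fm.natom (q+3) := fun F hF he =>
                Multiset.count_eq_zero.1 wq0 (he ▸ hF)
              obtain ⟨d₆, hh₆⟩ := inv_neg (by simp [Fm.isNeg]) d₂
              have hH := (IHa _ d₆ (by simp; omega)).2.1 (fun F hF => by
                  rcases Multiset.mem_cons.1 hF with rfl | hF
                  · exact Or.inr (Or.inr (Or.inr (Or.inr (Or.inr (Or.inr (Or.inr rfl))))))
                  · exact (hOkW _ hF).retarget (hneW _ hF))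
                (by rw [Multiset.count_cons_of_ne (by simp)]; omega)
                (by rw [Multiset.count_cons_of_ne (by simp)]; omega)
              obtain ⟨z1, z2⟩ := hH
              rw [Multiset.count_cons_of_ne (natom_ne (by omega))] at z1
              rw [Multiset.count_cons_of_ne (natom_ne (by omega))] at z2
              exact ⟨by omega, by omega,
                Relation.ReflTransGen.single ⟨Instr.halt, Step.halt heM hs0⟩⟩
            · obtain ⟨Θ, Ω₁, Ω₂, hCeq, -, ⟨d₁, -⟩, -⟩ := inv_tens prem
              exact (tens_atom_dead (fun F hF => hOk _ (by rw [hCeq]; exact mem_sub_left hF))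
                d₁ (by omega) (by omega) (by omega)).elim
            · obtain ⟨Θ, Ω₁, Ω₂, hCeq, -, ⟨d₁, -⟩, -⟩ := inv_tens prem
              exact (tens_atom_dead (fun F hF => hOk _ (by rw [hCeq]; exact mem_sub_left hF))
                d₁ (by omega) (by omega) (by omega)).elim
            · exact (tens_atom_dead hOk prem (by omega) (by omega) (by omega)).elim
          case incra =>
            subst hAe
            have hqr : s ≠ r := (hwf _ heM).2 (by simp)
            obtain ⟨Θ, Ω₁, Ω₂, hCeq, hΘ, ⟨d₁, hh₁⟩, ⟨d₂, hh₂⟩⟩ := inv_tens prem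
            obtain ⟨Θ₁, h1, hΘ₁⟩ := inv_atom d₁
            have hm0 : Fm.natom (s+3) ∈ Θ + Ω₁ := by
              rw [h1]; exact Multiset.mem_cons_self _ _
            have hm := hOk (Fm.natom (s+3)) (by rw [hCeq]; exact mem_sub_left hm0)
            have hsq : q = s := by
              rcases Ok.natom_cases hm with h | h | h <;> omega
            subst hsq
            rw [hCeq] at hOk hra hrb hone ⊢
            have K : ∀ f : Fm, (∀ B, f ≠ Fm.qm Lbl.inf B) →
                Multiset.count f (Θ + Ω₁ + Ω₂) =
                  (if f = Fm.natom (q + 3) then 1 else 0) + Multiset.count f (Θ + Ω₂) := by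
              intro f hf
              have zΘ := czInf hΘ hf
              have zΘ₁ := czInf hΘ₁ hf
              have a4 := ceq h1 f
              rw [Multiset.count_cons] at a4
              simp only [Multiset.count_add] at a4 ⊢
              split_ifs at a4 ⊢ with h <;> omega
            have ka0 := K _ (notInf_atom 0); rw [if_neg (by simp)] at ka0
            have ka1 := K _ (notInf_atom 1); rw [if_neg (by simp)] at ka1
            have kn0 := K _ (notInf_natom 0); rw [if_neg (natom_ne (by omega))] at kn0
            have kn1 := K _ (notInf_natom 1); rw [if_neg (natom_ne (by omega))] at kn1
            have kqa := K _ (notInf_qmla (Fm.natom 0)); rw [if_neg (by simp)] at kqa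
            have kqb := K _ (notInf_qmlb (Fm.natom 1)); rw [if_neg (by simp)] at kqb
            have knq := K _ (notInf_natom (q+3)); rw [if_pos rfl] at knq
            have hOkW : ∀ F ∈ Θ + Ω₂, Ok M (q+3) F := fun F hF => hOk _ (mem_of_mem_right hF)
            have wq0 : Multiset.count (Fm.natom (q+3)) (Θ + Ω₂) = 0 := by omega
            have hneW : ∀ F ∈ Θ + Ω₂, F ≠ Fm.natom (q+3) := fun F hF he =>
              Multiset.count_eq_zero.1 wq0 (he ▸ hF)
            have wr0 : Multiset.count (Fm.natom (r+3)) (Θ + Ω₂) = 0 :=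
              cz hOkW (fun hx => by rcases Ok.natom_cases hx with h | h | h <;> omega)
            obtain ⟨d₃, hh₃⟩ := inv_neg (by simp [Fm.isNeg]) d₂
            obtain ⟨d₄, hh₄⟩ := inv_par (fun F hF => (hOkW _ hF).neutral) d₃
            have hI := (IHa _ d₄ (by simp; omega)).1 r
              (fun F hF => by
                rcases Multiset.mem_cons.1 hF with rfl | hF
                · exact Or.inr (Or.inr (Or.inr (Or.inr (Or.inr (Or.inr (Or.inr rfl))))))
                · rcases Multiset.mem_cons.1 hF with rfl | hF
                  · exact Or.inr (Or.inl rfl)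
                  · exact (hOkW _ hF).retarget (hneW _ hF))
              (by rw [Multiset.count_cons_of_ne (by simp), Multiset.count_cons_of_ne (by simp)]
                  omega)
              (by rw [Multiset.count_cons_of_ne (by simp), Multiset.count_cons_of_ne (by simp)]
                  omega)
              (by rw [Multiset.count_cons_self, Multiset.count_cons_of_ne (by simp), wr0])
            obtain ⟨z1, z2, hH⟩ := hI
            rw [Multiset.count_cons_of_ne (natom_ne (by omega)),
              Multiset.count_cons_of_ne (by simp)] at z1
            rw [Multiset.count_cons_of_ne (natom_ne (by omega)),
              Multiset.count_cons_of_ne (by simp)] at z2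
            refine ⟨by omega, by omega, ?_⟩
            have eqa : Multiset.count (Fm.qm Lbl.la (Fm.natom 0))
                (Fm.natom (r+3) ::ₘ Fm.qm Lbl.la (Fm.natom 0) ::ₘ (Θ + Ω₂)) =
                Multiset.count (Fm.qm Lbl.la (Fm.natom 0)) (Θ + Ω₂) + 1 := by
              rw [Multiset.count_cons_of_ne (by simp), Multiset.count_cons_self]
            have eqb : Multiset.count (Fm.qm Lbl.lb (Fm.natom 1))
                (Fm.natom (r+3) ::ₘ Fm.qm Lbl.la (Fm.natom 0) ::ₘ (Θ + Ω₂)) =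
                Multiset.count (Fm.qm Lbl.lb (Fm.natom 1)) (Θ + Ω₂) := by
              rw [Multiset.count_cons_of_ne (by simp), Multiset.count_cons_of_ne (by simp)]
            rw [eqa, eqb] at hH
            rw [kqa, kqb, zero_add, zero_add]
            exact Relation.ReflTransGen.head ⟨Instr.incra, Step.incra heM hqr⟩ hH
          case incrb =>
            subst hAe
            have hqr : s ≠ r := (hwf _ heM).2 (by simp)
            obtain ⟨Θ, Ω₁, Ω₂, hCeq, hΘ, ⟨d₁, hh₁⟩, ⟨d₂, hh₂⟩⟩ := inv_tens prem
            obtain ⟨Θ₁, h1, hΘ₁⟩ := inv_atom d₁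
            have hm0 : Fm.natom (s+3) ∈ Θ + Ω₁ := by
              rw [h1]; exact Multiset.mem_cons_self _ _
            have hm := hOk (Fm.natom (s+3)) (by rw [hCeq]; exact mem_sub_left hm0)
            have hsq : q = s := by
              rcases Ok.natom_cases hm with h | h | h <;> omega
            subst hsq
            rw [hCeq] at hOk hra hrb hone ⊢
            have K : ∀ f : Fm, (∀ B, f ≠ Fm.qm Lbl.inf B) →
                Multiset.count f (Θ + Ω₁ + Ω₂) =
                  (if f = Fm.natom (q + 3) then 1 else 0) + Multiset.count f (Θ + Ω₂) := by
              intro f hf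
              have zΘ := czInf hΘ hf
              have zΘ₁ := czInf hΘ₁ hf
              have a4 := ceq h1 f
              rw [Multiset.count_cons] at a4
              simp only [Multiset.count_add] at a4 ⊢
              split_ifs at a4 ⊢ with h <;> omega
            have ka0 := K _ (notInf_atom 0); rw [if_neg (by simp)] at ka0
            have ka1 := K _ (notInf_atom 1); rw [if_neg (by simp)] at ka1
            have kn0 := K _ (notInf_natom 0); rw [if_neg (natom_ne (by omega))] at kn0
            have kn1 := K _ (notInf_natom 1); rw [if_neg (natom_ne (by omega))] at kn1
            have kqa := K _ (notInf_qmla (Fm.natom 0)); rw [if_neg (by simp)] at kqa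
            have kqb := K _ (notInf_qmlb (Fm.natom 1)); rw [if_neg (by simp)] at kqb
            have knq := K _ (notInf_natom (q+3)); rw [if_pos rfl] at knq
            have hOkW : ∀ F ∈ Θ + Ω₂, Ok M (q+3) F := fun F hF => hOk _ (mem_of_mem_right hF)
            have wq0 : Multiset.count (Fm.natom (q+3)) (Θ + Ω₂) = 0 := by omega
            have hneW : ∀ F ∈ Θ + Ω₂, F ≠ Fm.natom (q+3) := fun F hF he =>
              Multiset.count_eq_zero.1 wq0 (he ▸ hF)
            have wr0 : Multiset.count (Fm.natom (r+3)) (Θ + Ω₂) = 0 :=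
              cz hOkW (fun hx => by rcases Ok.natom_cases hx with h | h | h <;> omega)
            obtain ⟨d₃, hh₃⟩ := inv_neg (by simp [Fm.isNeg]) d₂
            obtain ⟨d₄, hh₄⟩ := inv_par (fun F hF => (hOkW _ hF).neutral) d₃
            have hI := (IHa _ d₄ (by simp; omega)).1 r
              (fun F hF => by
                rcases Multiset.mem_cons.1 hF with rfl | hF
                · exact Or.inr (Or.inr (Or.inr (Or.inr (Or.inr (Or.inr (Or.inr rfl))))))
                · rcases Multiset.mem_cons.1 hF with rfl | hF
                  · exact Or.inr (Or.inr (Or.inl rfl))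
                  · exact (hOkW _ hF).retarget (hneW _ hF))
              (by rw [Multiset.count_cons_of_ne (by simp), Multiset.count_cons_of_ne (by simp)]
                  omega)
              (by rw [Multiset.count_cons_of_ne (by simp), Multiset.count_cons_of_ne (by simp)]
                  omega)
              (by rw [Multiset.count_cons_self, Multiset.count_cons_of_ne (by simp), wr0])
            obtain ⟨z1, z2, hH⟩ := hI
            rw [Multiset.count_cons_of_ne (natom_ne (by omega)),
              Multiset.count_cons_of_ne (by simp)] at z1
            rw [Multiset.count_cons_of_ne (natom_ne (by omega)),
              Multiset.count_cons_of_ne (by simp)] at z2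
            refine ⟨by omega, by omega, ?_⟩
            have eqa : Multiset.count (Fm.qm Lbl.la (Fm.natom 0))
                (Fm.natom (r+3) ::ₘ Fm.qm Lbl.lb (Fm.natom 1) ::ₘ (Θ + Ω₂)) =
                Multiset.count (Fm.qm Lbl.la (Fm.natom 0)) (Θ + Ω₂) := by
              rw [Multiset.count_cons_of_ne (by simp), Multiset.count_cons_of_ne (by simp)]
            have eqb : Multiset.count (Fm.qm Lbl.lb (Fm.natom 1))
                (Fm.natom (r+3) ::ₘ Fm.qm Lbl.lb (Fm.natom 1) ::ₘ (Θ + Ω₂)) =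
                Multiset.count (Fm.qm Lbl.lb (Fm.natom 1)) (Θ + Ω₂) + 1 := by
              rw [Multiset.count_cons_of_ne (by simp), Multiset.count_cons_self]
            rw [eqa, eqb] at hH
            rw [kqa, kqb, zero_add, zero_add]
            exact Relation.ReflTransGen.head ⟨Instr.incrb, Step.incrb heM hqr⟩ hH
          case decra =>
            subst hAe
            have hqr : s ≠ r := (hwf _ heM).2 (by simp)
            obtain ⟨Θ, Ω₁, Ω₂, hCeq, hΘ, ⟨d₁, hh₁⟩, ⟨d₂, hh₂⟩⟩ := inv_tens prem
            obtain ⟨Θ', Ω₁', Ω₂', hCeq', hΘ', ⟨d₃, hh₃⟩, ⟨d₄, hh₄⟩⟩ := inv_tens d₁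
            obtain ⟨Θ₁, h1, hΘ₁⟩ := inv_atom d₃
            obtain ⟨Γb, Δb, h2, hΓb, hΔb, d₅, hh₅⟩ := inv_bang d₄
            have hm0 : Fm.natom (s+3) ∈ Θ' + Ω₁' := by
              rw [h1]; exact Multiset.mem_cons_self _ _
            have hm1 : Fm.natom (s+3) ∈ Θ + Ω₁ := by
              rw [hCeq']; exact mem_sub_left hm0
            have hm := hOk (Fm.natom (s+3)) (by rw [hCeq]; exact mem_sub_left hm1)
            have hsq : q = s := by
              rcases Ok.natom_cases hm with h | h | h <;> omega
            subst hsq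
            rw [hCeq] at hOk hra hrb hone ⊢
            have K : ∀ f : Fm, (∀ B, f ≠ Fm.qm Lbl.inf B) →
                Multiset.count f (Θ + Ω₁ + Ω₂) =
                  (if f = Fm.natom (q + 3) then 1 else 0) + Multiset.count f Γb +
                    Multiset.count f (Θ + Ω₂) := by
              intro f hf
              have zΘ := czInf hΘ hf
              have zΘ' := czInf hΘ' hf
              have zΘ₁ := czInf hΘ₁ hf
              have zΔ := czInf hΔb hf
              have a2 := ceq hCeq' f
              have a4 := ceq h1 f
              have a5 := ceq h2 f
              rw [Multiset.count_cons] at a4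
              simp only [Multiset.count_add] at a2 a4 a5 ⊢
              split_ifs at a4 ⊢ with h <;> omega
            have gn0 : Multiset.count (Fm.natom 0) Γb = 0 :=
              cz hΓb (by rintro ⟨v, B, hB, -⟩; simp at hB)
            have gn1 : Multiset.count (Fm.natom 1) Γb = 0 :=
              cz hΓb (by rintro ⟨v, B, hB, -⟩; simp at hB)
            have ga0 : Multiset.count (Fm.atom 0) Γb = 0 :=
              cz hΓb (by rintro ⟨v, B, hB, -⟩; simp at hB)
            have ga1 : Multiset.count (Fm.atom 1) Γb = 0 :=
              cz hΓb (by rintro ⟨v, B, hB, -⟩; simp at hB)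
            have gnq : Multiset.count (Fm.natom (q+3)) Γb = 0 :=
              cz hΓb (by rintro ⟨v, B, hB, -⟩; simp at hB)
            have gnr : Multiset.count (Fm.natom (r+3)) Γb = 0 :=
              cz hΓb (by rintro ⟨v, B, hB, -⟩; simp at hB)
            have gqb : Multiset.count (Fm.qm Lbl.lb (Fm.natom 1)) Γb = 0 :=
              cz hΓb (by
                rintro ⟨v, B, hB, hv⟩
                injection hB with e1 e2
                subst e1
                simp [Lbl.le] at hv)
            have ka0 := K _ (notInf_atom 0); rw [if_neg (by simp)] at ka0
            have ka1 := K _ (notInf_atom 1); rw [if_neg (by simp)] at ka1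
            have kn0 := K _ (notInf_natom 0); rw [if_neg (natom_ne (by omega))] at kn0
            have kn1 := K _ (notInf_natom 1); rw [if_neg (natom_ne (by omega))] at kn1
            have kqa := K _ (notInf_qmla (Fm.natom 0)); rw [if_neg (by simp)] at kqa
            have kqb := K _ (notInf_qmlb (Fm.natom 1)); rw [if_neg (by simp)] at kqb
            have knq := K _ (notInf_natom (q+3)); rw [if_pos rfl] at knq
            have hOkW : ∀ F ∈ Θ + Ω₂, Ok M (q+3) F := fun F hF => hOk _ (mem_of_mem_right hF)
            have wq0 : Multiset.count (Fm.natom (q+3)) (Θ + Ω₂) = 0 := by omega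
            have hneW : ∀ F ∈ Θ + Ω₂, F ≠ Fm.natom (q+3) := fun F hF he =>
              Multiset.count_eq_zero.1 wq0 (he ▸ hF)
            have wr0 : Multiset.count (Fm.natom (r+3)) (Θ + Ω₂) = 0 :=
              cz hOkW (fun hx => by rcases Ok.natom_cases hx with h | h | h <;> omega)
            -- the promotion consumes exactly one ?ᵃ¬r_a
            have hshA : ∀ F ∈ Fm.atom 0 ::ₘ Γb, OkA M F := by
              intro F hF
              rcases Multiset.mem_cons.1 hF with rfl | hF
              · exact Or.inr (Or.inr (Or.inr rfl))
              · obtain ⟨v, B, rfl, hv⟩ := hΓb _ hF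
                have hmC := hOk (Fm.qm v B) (by
                  refine mem_sub_left ?_; rw [hCeq']; refine mem_of_mem_right ?_
                  rw [h2]; exact mem_sub_left hF)
                rcases Ok.qm_cases hmC with ⟨rfl, hB⟩ | ⟨rfl, rfl⟩ | ⟨rfl, rfl⟩
                · exact Or.inl ⟨B, hB, rfl⟩
                · exact Or.inr (Or.inl rfl)
                · simp [Lbl.le] at hv
            have hAcl := (IHa _ d₅ (by simp; omega)).2.2.1 hshA
            rw [Multiset.count_cons_of_ne (by simp), Multiset.count_cons_of_ne (by simp)] at hAcl
            -- continuation
            obtain ⟨d₆, hh₆⟩ := inv_neg (by simp [Fm.isNeg]) d₂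
            have hI := (IHa _ d₆ (by simp; omega)).1 r
              (fun F hF => by
                rcases Multiset.mem_cons.1 hF with rfl | hF
                · exact Or.inr (Or.inr (Or.inr (Or.inr (Or.inr (Or.inr (Or.inr rfl))))))
                · exact (hOkW _ hF).retarget (hneW _ hF))
              (by rw [Multiset.count_cons_of_ne (by simp)]; omega)
              (by rw [Multiset.count_cons_of_ne (by simp)]; omega)
              (by rw [Multiset.count_cons_self, wr0])
            obtain ⟨z1, z2, hH⟩ := hI
            rw [Multiset.count_cons_of_ne (natom_ne (by omega))] at z1
            rw [Multiset.count_cons_of_ne (natom_ne (by omega))] at z2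
            refine ⟨by omega, by omega, ?_⟩
            have eqa : Multiset.count (Fm.qm Lbl.la (Fm.natom 0))
                (Fm.natom (r+3) ::ₘ (Θ + Ω₂)) =
                Multiset.count (Fm.qm Lbl.la (Fm.natom 0)) (Θ + Ω₂) := by
              rw [Multiset.count_cons_of_ne (by simp)]
            have eqb : Multiset.count (Fm.qm Lbl.lb (Fm.natom 1))
                (Fm.natom (r+3) ::ₘ (Θ + Ω₂)) =
                Multiset.count (Fm.qm Lbl.lb (Fm.natom 1)) (Θ + Ω₂) := by
              rw [Multiset.count_cons_of_ne (by simp)]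
            have hm1 : Multiset.count (Fm.qm Lbl.la (Fm.natom 0)) (Θ + Ω₁ + Ω₂) =
                Multiset.count (Fm.qm Lbl.la (Fm.natom 0)) (Θ + Ω₂) + 1 := by omega
            have hm2 : Multiset.count (Fm.qm Lbl.lb (Fm.natom 1)) (Θ + Ω₁ + Ω₂) =
                Multiset.count (Fm.qm Lbl.lb (Fm.natom 1)) (Θ + Ω₂) := by omega
            rw [eqa, eqb] at hH
            rw [hm1, hm2]
            exact Relation.ReflTransGen.head ⟨Instr.decra, Step.decra heM hqr⟩ hH
          case decrb =>
            subst hAe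
            have hqr : s ≠ r := (hwf _ heM).2 (by simp)
            obtain ⟨Θ, Ω₁, Ω₂, hCeq, hΘ, ⟨d₁, hh₁⟩, ⟨d₂, hh₂⟩⟩ := inv_tens prem
            obtain ⟨Θ', Ω₁', Ω₂', hCeq', hΘ', ⟨d₃, hh₃⟩, ⟨d₄, hh₄⟩⟩ := inv_tens d₁
            obtain ⟨Θ₁, h1, hΘ₁⟩ := inv_atom d₃
            obtain ⟨Γb, Δb, h2, hΓb, hΔb, d₅, hh₅⟩ := inv_bang d₄
            have hm0 : Fm.natom (s+3) ∈ Θ' + Ω₁' := by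
              rw [h1]; exact Multiset.mem_cons_self _ _
            have hm1 : Fm.natom (s+3) ∈ Θ + Ω₁ := by
              rw [hCeq']; exact mem_sub_left hm0
            have hm := hOk (Fm.natom (s+3)) (by rw [hCeq]; exact mem_sub_left hm1)
            have hsq : q = s := by
              rcases Ok.natom_cases hm with h | h | h <;> omega
            subst hsq
            rw [hCeq] at hOk hra hrb hone ⊢
            have K : ∀ f : Fm, (∀ B, f ≠ Fm.qm Lbl.inf B) →
                Multiset.count f (Θ + Ω₁ + Ω₂) =
                  (if f = Fm.natom (q + 3) then 1 else 0) + Multiset.count f Γb +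
                    Multiset.count f (Θ + Ω₂) := by
              intro f hf
              have zΘ := czInf hΘ hf
              have zΘ' := czInf hΘ' hf
              have zΘ₁ := czInf hΘ₁ hf
              have zΔ := czInf hΔb hf
              have a2 := ceq hCeq' f
              have a4 := ceq h1 f
              have a5 := ceq h2 f
              rw [Multiset.count_cons] at a4
              simp only [Multiset.count_add] at a2 a4 a5 ⊢
              split_ifs at a4 ⊢ with h <;> omega
            have gn0 : Multiset.count (Fm.natom 0) Γb = 0 :=
              cz hΓb (by rintro ⟨v, B, hB, -⟩; simp at hB)
            have gn1 : Multiset.count (Fm.natom 1) Γb = 0 :=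
              cz hΓb (by rintro ⟨v, B, hB, -⟩; simp at hB)
            have ga0 : Multiset.count (Fm.atom 0) Γb = 0 :=
              cz hΓb (by rintro ⟨v, B, hB, -⟩; simp at hB)
            have ga1 : Multiset.count (Fm.atom 1) Γb = 0 :=
              cz hΓb (by rintro ⟨v, B, hB, -⟩; simp at hB)
            have gnq : Multiset.count (Fm.natom (q+3)) Γb = 0 :=
              cz hΓb (by rintro ⟨v, B, hB, -⟩; simp at hB)
            have gnr : Multiset.count (Fm.natom (r+3)) Γb = 0 :=
              cz hΓb (by rintro ⟨v, B, hB, -⟩; simp at hB)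
            have gqa : Multiset.count (Fm.qm Lbl.la (Fm.natom 0)) Γb = 0 :=
              cz hΓb (by
                rintro ⟨v, B, hB, hv⟩
                injection hB with e1 e2
                subst e1
                simp [Lbl.le] at hv)
            have ka0 := K _ (notInf_atom 0); rw [if_neg (by simp)] at ka0
            have ka1 := K _ (notInf_atom 1); rw [if_neg (by simp)] at ka1
            have kn0 := K _ (notInf_natom 0); rw [if_neg (natom_ne (by omega))] at kn0
            have kn1 := K _ (notInf_natom 1); rw [if_neg (natom_ne (by omega))] at kn1
            have kqa := K _ (notInf_qmla (Fm.natom 0)); rw [if_neg (by simp)] at kqa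
            have kqb := K _ (notInf_qmlb (Fm.natom 1)); rw [if_neg (by simp)] at kqb
            have knq := K _ (notInf_natom (q+3)); rw [if_pos rfl] at knq
            have hOkW : ∀ F ∈ Θ + Ω₂, Ok M (q+3) F := fun F hF => hOk _ (mem_of_mem_right hF)
            have wq0 : Multiset.count (Fm.natom (q+3)) (Θ + Ω₂) = 0 := by omega
            have hneW : ∀ F ∈ Θ + Ω₂, F ≠ Fm.natom (q+3) := fun F hF he =>
              Multiset.count_eq_zero.1 wq0 (he ▸ hF)
            have wr0 : Multiset.count (Fm.natom (r+3)) (Θ + Ω₂) = 0 :=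
              cz hOkW (fun hx => by rcases Ok.natom_cases hx with h | h | h <;> omega)
            have hshB : ∀ F ∈ Fm.atom 1 ::ₘ Γb, OkB M F := by
              intro F hF
              rcases Multiset.mem_cons.1 hF with rfl | hF
              · exact Or.inr (Or.inr (Or.inr rfl))
              · obtain ⟨v, B, rfl, hv⟩ := hΓb _ hF
                have hmC := hOk (Fm.qm v B) (by
                  refine mem_sub_left ?_; rw [hCeq']; refine mem_of_mem_right ?_
                  rw [h2]; exact mem_sub_left hF)
                rcases Ok.qm_cases hmC with ⟨rfl, hB⟩ | ⟨rfl, rfl⟩ | ⟨rfl, rfl⟩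
                · exact Or.inl ⟨B, hB, rfl⟩
                · simp [Lbl.le] at hv
                · exact Or.inr (Or.inl rfl)
            have hBcl := (IHa _ d₅ (by simp; omega)).2.2.2 hshB
            rw [Multiset.count_cons_of_ne (by simp), Multiset.count_cons_of_ne (by simp)] at hBcl
            obtain ⟨d₆, hh₆⟩ := inv_neg (by simp [Fm.isNeg]) d₂
            have hI := (IHa _ d₆ (by simp; omega)).1 r
              (fun F hF => by
                rcases Multiset.mem_cons.1 hF with rfl | hF
                · exact Or.inr (Or.inr (Or.inr (Or.inr (Or.inr (Or.inr (Or.inr rfl))))))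
                · exact (hOkW _ hF).retarget (hneW _ hF))
              (by rw [Multiset.count_cons_of_ne (by simp)]; omega)
              (by rw [Multiset.count_cons_of_ne (by simp)]; omega)
              (by rw [Multiset.count_cons_self, wr0])
            obtain ⟨z1, z2, hH⟩ := hI
            rw [Multiset.count_cons_of_ne (natom_ne (by omega))] at z1
            rw [Multiset.count_cons_of_ne (natom_ne (by omega))] at z2
            refine ⟨by omega, by omega, ?_⟩
            have eqa : Multiset.count (Fm.qm Lbl.la (Fm.natom 0))
                (Fm.natom (r+3) ::ₘ (Θ + Ω₂)) =
                Multiset.count (Fm.qm Lbl.la (Fm.natom 0)) (Θ + Ω₂) := by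
              rw [Multiset.count_cons_of_ne (by simp)]
            have eqb : Multiset.count (Fm.qm Lbl.lb (Fm.natom 1))
                (Fm.natom (r+3) ::ₘ (Θ + Ω₂)) =
                Multiset.count (Fm.qm Lbl.lb (Fm.natom 1)) (Θ + Ω₂) := by
              rw [Multiset.count_cons_of_ne (by simp)]
            have hm1 : Multiset.count (Fm.qm Lbl.lb (Fm.natom 1)) (Θ + Ω₁ + Ω₂) =
                Multiset.count (Fm.qm Lbl.lb (Fm.natom 1)) (Θ + Ω₂) + 1 := by omega
            have hm2 : Multiset.count (Fm.qm Lbl.la (Fm.natom 0)) (Θ + Ω₁ + Ω₂) =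
                Multiset.count (Fm.qm Lbl.la (Fm.natom 0)) (Θ + Ω₂) := by omega
            rw [eqa, eqb] at hH
            rw [hm2, hm1]
            exact Relation.ReflTransGen.head ⟨Instr.decrb, Step.decrb heM hqr⟩ hH
          case isza =>
            subst hAe
            have hqr : s ≠ r := (hwf _ heM).2 (by simp)
            obtain ⟨Θ, Ω₁, Ω₂, hCeq, hΘ, ⟨d₁, hh₁⟩, ⟨d₂, hh₂⟩⟩ := inv_tens prem
            obtain ⟨Θ₁, h1, hΘ₁⟩ := inv_atom d₁
            obtain ⟨Γb, Δb, h2, hΓb, hΔb, d₅, hh₅⟩ := inv_bang d₂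
            have hm0 : Fm.natom (s+3) ∈ Θ + Ω₁ := by
              rw [h1]; exact Multiset.mem_cons_self _ _
            have hm := hOk (Fm.natom (s+3)) (by rw [hCeq]; exact mem_sub_left hm0)
            have hsq : q = s := by
              rcases Ok.natom_cases hm with h | h | h <;> omega
            subst hsq
            rw [hCeq] at hOk hra hrb hone ⊢
            have K : ∀ f : Fm, (∀ B, f ≠ Fm.qm Lbl.inf B) →
                Multiset.count f (Θ + Ω₁ + Ω₂) =
                  (if f = Fm.natom (q + 3) then 1 else 0) + Multiset.count f Γb := by
              intro f hf
              have zΘ := czInf hΘ hf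
              have zΘ₁ := czInf hΘ₁ hf
              have zΔ := czInf hΔb hf
              have a4 := ceq h1 f
              have a5 := ceq h2 f
              rw [Multiset.count_cons] at a4
              simp only [Multiset.count_add] at a4 a5 ⊢
              split_ifs at a4 ⊢ with h <;> omega
            have gn0 : Multiset.count (Fm.natom 0) Γb = 0 :=
              cz hΓb (by rintro ⟨v, B, hB, -⟩; simp at hB)
            have gn1 : Multiset.count (Fm.natom 1) Γb = 0 :=
              cz hΓb (by rintro ⟨v, B, hB, -⟩; simp at hB)
            have ga0 : Multiset.count (Fm.atom 0) Γb = 0 :=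
              cz hΓb (by rintro ⟨v, B, hB, -⟩; simp at hB)
            have ga1 : Multiset.count (Fm.atom 1) Γb = 0 :=
              cz hΓb (by rintro ⟨v, B, hB, -⟩; simp at hB)
            have gnr : Multiset.count (Fm.natom (r+3)) Γb = 0 :=
              cz hΓb (by rintro ⟨v, B, hB, -⟩; simp at hB)
            have gqa : Multiset.count (Fm.qm Lbl.la (Fm.natom 0)) Γb = 0 :=
              cz hΓb (by
                rintro ⟨v, B, hB, hv⟩
                injection hB with e1 e2
                subst e1
                simp [Lbl.le] at hv)
            have ka0 := K _ (notInf_atom 0); rw [if_neg (by simp)] at ka0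
            have ka1 := K _ (notInf_atom 1); rw [if_neg (by simp)] at ka1
            have kn0 := K _ (notInf_natom 0); rw [if_neg (natom_ne (by omega))] at kn0
            have kn1 := K _ (notInf_natom 1); rw [if_neg (natom_ne (by omega))] at kn1
            have kqa := K _ (notInf_qmla (Fm.natom 0)); rw [if_neg (by simp)] at kqa
            have kqb := K _ (notInf_qmlb (Fm.natom 1)); rw [if_neg (by simp)] at kqb
            have hI := (IHa _ d₅ (by simp; omega)).1 r
              (fun F hF => by
                rcases Multiset.mem_cons.1 hF with rfl | hF
                · exact Or.inr (Or.inr (Or.inr (Or.inr (Or.inr (Or.inr (Or.inr rfl))))))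
                · obtain ⟨v, B, rfl, hv⟩ := hΓb _ hF
                  have hmC := hOk (Fm.qm v B) (by
                    refine mem_of_mem_right ?_; rw [h2]; exact mem_sub_left hF)
                  rcases Ok.qm_cases hmC with ⟨rfl, hB⟩ | ⟨rfl, rfl⟩ | ⟨rfl, rfl⟩
                  · exact Or.inl ⟨B, hB, rfl⟩
                  · simp [Lbl.le] at hv
                  · exact Or.inr (Or.inr (Or.inl rfl)))
              (by rw [Multiset.count_cons_of_ne (by simp)]; omega)
              (by rw [Multiset.count_cons_of_ne (by simp)]; omega)
              (by rw [Multiset.count_cons_self, gnr])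
            obtain ⟨z1, z2, hH⟩ := hI
            rw [Multiset.count_cons_of_ne (natom_ne (by omega))] at z1
            rw [Multiset.count_cons_of_ne (natom_ne (by omega))] at z2
            refine ⟨by omega, by omega, ?_⟩
            have eqa : Multiset.count (Fm.qm Lbl.la (Fm.natom 0))
                (Fm.natom (r+3) ::ₘ Γb) =
                Multiset.count (Fm.qm Lbl.la (Fm.natom 0)) Γb := by
              rw [Multiset.count_cons_of_ne (by simp)]
            have eqb : Multiset.count (Fm.qm Lbl.lb (Fm.natom 1))
                (Fm.natom (r+3) ::ₘ Γb) =
                Multiset.count (Fm.qm Lbl.lb (Fm.natom 1)) Γb := by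
              rw [Multiset.count_cons_of_ne (by simp)]
            have hqa0 : Multiset.count (Fm.qm Lbl.la (Fm.natom 0)) (Θ + Ω₁ + Ω₂) = 0 := by
              omega
            have hm2 : Multiset.count (Fm.qm Lbl.lb (Fm.natom 1)) (Θ + Ω₁ + Ω₂) =
                Multiset.count (Fm.qm Lbl.lb (Fm.natom 1)) Γb := by omega
            rw [eqa, gqa] at hH
            rw [eqb] at hH
            rw [hqa0, hm2]
            exact Relation.ReflTransGen.head ⟨Instr.isza, Step.isza heM hqr⟩ hH
          case iszb =>
            subst hAe
            have hqr : s ≠ r := (hwf _ heM).2 (by simp)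
            obtain ⟨Θ, Ω₁, Ω₂, hCeq, hΘ, ⟨d₁, hh₁⟩, ⟨d₂, hh₂⟩⟩ := inv_tens prem
            obtain ⟨Θ₁, h1, hΘ₁⟩ := inv_atom d₁
            obtain ⟨Γb, Δb, h2, hΓb, hΔb, d₅, hh₅⟩ := inv_bang d₂
            have hm0 : Fm.natom (s+3) ∈ Θ + Ω₁ := by
              rw [h1]; exact Multiset.mem_cons_self _ _
            have hm := hOk (Fm.natom (s+3)) (by rw [hCeq]; exact mem_sub_left hm0)
            have hsq : q = s := by
              rcases Ok.natom_cases hm with h | h | h <;> omega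
            subst hsq
            rw [hCeq] at hOk hra hrb hone ⊢
            have K : ∀ f : Fm, (∀ B, f ≠ Fm.qm Lbl.inf B) →
                Multiset.count f (Θ + Ω₁ + Ω₂) =
                  (if f = Fm.natom (q + 3) then 1 else 0) + Multiset.count f Γb := by
              intro f hf
              have zΘ := czInf hΘ hf
              have zΘ₁ := czInf hΘ₁ hf
              have zΔ := czInf hΔb hf
              have a4 := ceq h1 f
              have a5 := ceq h2 f
              rw [Multiset.count_cons] at a4
              simp only [Multiset.count_add] at a4 a5 ⊢
              split_ifs at a4 ⊢ with h <;> omega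
            have gn0 : Multiset.count (Fm.natom 0) Γb = 0 :=
              cz hΓb (by rintro ⟨v, B, hB, -⟩; simp at hB)
            have gn1 : Multiset.count (Fm.natom 1) Γb = 0 :=
              cz hΓb (by rintro ⟨v, B, hB, -⟩; simp at hB)
            have ga0 : Multiset.count (Fm.atom 0) Γb = 0 :=
              cz hΓb (by rintro ⟨v, B, hB, -⟩; simp at hB)
            have ga1 : Multiset.count (Fm.atom 1) Γb = 0 :=
              cz hΓb (by rintro ⟨v, B, hB, -⟩; simp at hB)
            have gnr : Multiset.count (Fm.natom (r+3)) Γb = 0 :=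
              cz hΓb (by rintro ⟨v, B, hB, -⟩; simp at hB)
            have gqb : Multiset.count (Fm.qm Lbl.lb (Fm.natom 1)) Γb = 0 :=
              cz hΓb (by
                rintro ⟨v, B, hB, hv⟩
                injection hB with e1 e2
                subst e1
                simp [Lbl.le] at hv)
            have ka0 := K _ (notInf_atom 0); rw [if_neg (by simp)] at ka0
            have ka1 := K _ (notInf_atom 1); rw [if_neg (by simp)] at ka1
            have kn0 := K _ (notInf_natom 0); rw [if_neg (natom_ne (by omega))] at kn0
            have kn1 := K _ (notInf_natom 1); rw [if_neg (natom_ne (by omega))] at kn1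
            have kqa := K _ (notInf_qmla (Fm.natom 0)); rw [if_neg (by simp)] at kqa
            have kqb := K _ (notInf_qmlb (Fm.natom 1)); rw [if_neg (by simp)] at kqb
            have hI := (IHa _ d₅ (by simp; omega)).1 r
              (fun F hF => by
                rcases Multiset.mem_cons.1 hF with rfl | hF
                · exact Or.inr (Or.inr (Or.inr (Or.inr (Or.inr (Or.inr (Or.inr rfl))))))
                · obtain ⟨v, B, rfl, hv⟩ := hΓb _ hF
                  have hmC := hOk (Fm.qm v B) (by
                    refine mem_of_mem_right ?_; rw [h2]; exact mem_sub_left hF)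
                  rcases Ok.qm_cases hmC with ⟨rfl, hB⟩ | ⟨rfl, rfl⟩ | ⟨rfl, rfl⟩
                  · exact Or.inl ⟨B, hB, rfl⟩
                  · exact Or.inr (Or.inl rfl)
                  · simp [Lbl.le] at hv)
              (by rw [Multiset.count_cons_of_ne (by simp)]; omega)
              (by rw [Multiset.count_cons_of_ne (by simp)]; omega)
              (by rw [Multiset.count_cons_self, gnr])
            obtain ⟨z1, z2, hH⟩ := hI
            rw [Multiset.count_cons_of_ne (natom_ne (by omega))] at z1
            rw [Multiset.count_cons_of_ne (natom_ne (by omega))] at z2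
            refine ⟨by omega, by omega, ?_⟩
            have eqa : Multiset.count (Fm.qm Lbl.la (Fm.natom 0))
                (Fm.natom (r+3) ::ₘ Γb) =
                Multiset.count (Fm.qm Lbl.la (Fm.natom 0)) Γb := by
              rw [Multiset.count_cons_of_ne (by simp)]
            have eqb : Multiset.count (Fm.qm Lbl.lb (Fm.natom 1))
                (Fm.natom (r+3) ::ₘ Γb) =
                Multiset.count (Fm.qm Lbl.lb (Fm.natom 1)) Γb := by
              rw [Multiset.count_cons_of_ne (by simp)]
            have hqb0 : Multiset.count (Fm.qm Lbl.lb (Fm.natom 1)) (Θ + Ω₁ + Ω₂) = 0 := by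
              omega
            have hm2 : Multiset.count (Fm.qm Lbl.la (Fm.natom 0)) (Θ + Ω₁ + Ω₂) =
                Multiset.count (Fm.qm Lbl.la (Fm.natom 0)) Γb := by omega
            rw [eqb, gqb] at hH
            rw [eqa] at hH
            rw [hm2, hqb0]
            exact Relation.ReflTransGen.head ⟨Instr.iszb, Step.iszb heM hqr⟩ hH
        · simp at h1
        · simp at h1
  -- ================= H-claim =================
  · intro hOk hra hrb
    cases d with
    | par d' =>
        exact absurd (Ok.neutral (hOk _ (Multiset.mem_cons_self _ _))) (by simp [Fm.isNeutral])
    | bot d' =>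
        exact absurd (Ok.neutral (hOk _ (Multiset.mem_cons_self _ _))) (by simp [Fm.isNeutral])
    | decide hpos hΩn prem =>
        rcases hOk _ (Multiset.mem_cons_self _ _) with
          ⟨B, -, rfl⟩ | rfl | rfl | rfl | rfl | rfl | rfl | rfl
        · simp [Fm.isPos] at hpos
        · simp [Fm.isPos] at hpos
        · simp [Fm.isPos] at hpos
        · simp [Fm.isPos] at hpos
        · simp [Fm.isPos] at hpos
        · rw [Multiset.count_cons_self] at hra; omega
        · rw [Multiset.count_cons_self] at hrb; omega
        · simp [Fm.isPos] at hpos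
    | ldecide hu hΩn prem =>
        rcases Ok.qm_cases (hOk _ (Multiset.mem_cons_self _ _)) with
          ⟨h1, -⟩ | ⟨rfl, rfl⟩ | ⟨rfl, rfl⟩
        · exact absurd h1 hu
        · obtain ⟨d'', hlt⟩ := inv_neg (by simp [Fm.isNeg]) prem
          have hH := (IHa _ d'' (by simp; omega)).2.1 (fun F hF => by
              rcases Multiset.mem_cons.1 hF with rfl | hF
              · exact Or.inr (Or.inr (Or.inr (Or.inl rfl)))
              · exact hOk _ (Multiset.mem_cons_of_mem hF))
            (by rw [Multiset.count_cons_of_ne (by simp)]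
                rw [Multiset.count_cons_of_ne (by simp)] at hra; exact hra)
            (by rw [Multiset.count_cons_of_ne (by simp)]
                rw [Multiset.count_cons_of_ne (by simp)] at hrb; exact hrb)
          rw [Multiset.count_cons_self] at hH
          exact absurd hH.1 (by omega)
        · obtain ⟨d'', hlt⟩ := inv_neg (by simp [Fm.isNeg]) prem
          have hH := (IHa _ d'' (by simp; omega)).2.1 (fun F hF => by
              rcases Multiset.mem_cons.1 hF with rfl | hF
              · exact Or.inr (Or.inr (Or.inr (Or.inr (Or.inl rfl))))
              · exact hOk _ (Multiset.mem_cons_of_mem hF))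
            (by rw [Multiset.count_cons_of_ne (by simp)]
                rw [Multiset.count_cons_of_ne (by simp)] at hra; exact hra)
            (by rw [Multiset.count_cons_of_ne (by simp)]
                rw [Multiset.count_cons_of_ne (by simp)] at hrb; exact hrb)
          rw [Multiset.count_cons_self] at hH
          exact absurd hH.2 (by omega)
    | udecide hΩn prem =>
        rcases Ok.qm_cases (hOk _ (Multiset.mem_cons_self _ _)) with
          ⟨-, hpi⟩ | ⟨h1, -⟩ | ⟨h1, -⟩
        · obtain ⟨e, heM, hAe⟩ := mem_piCtx.1 hpi
          obtain ⟨s, i, r⟩ := e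
          cases i <;> simp [encInstr, stA, nSt, Msel.hA, nH, qa, qb, raA, rbA, nRa, nRb] at hAe
          case incra =>
            subst hAe
            exact (tens_atom_dead hOk prem (by omega) (by omega) (by omega)).elim
          case incrb =>
            subst hAe
            exact (tens_atom_dead hOk prem (by omega) (by omega) (by omega)).elim
          case isza =>
            subst hAe
            exact (tens_atom_dead hOk prem (by omega) (by omega) (by omega)).elim
          case iszb =>
            subst hAe
            exact (tens_atom_dead hOk prem (by omega) (by omega) (by omega)).elim
          case decra =>
            subst hAe
            obtain ⟨Θ, Ω₁, Ω₂, hCeq, -, ⟨d₁, -⟩, -⟩ := inv_tens prem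
            exact (tens_atom_dead (fun F hF => hOk _ (by rw [hCeq]; exact mem_sub_left hF))
              d₁ (by omega) (by omega) (by omega)).elim
          case decrb =>
            subst hAe
            obtain ⟨Θ, Ω₁, Ω₂, hCeq, -, ⟨d₁, -⟩, -⟩ := inv_tens prem
            exact (tens_atom_dead (fun F hF => hOk _ (by rw [hCeq]; exact mem_sub_left hF))
              d₁ (by omega) (by omega) (by omega)).elim
          case halt =>
            rcases hAe with rfl | rfl | rfl | rfl
            · exact (tens_atom_dead hOk prem (by omega) (by omega) (by omega)).elim
            · -- h ⊗ !ᵃr_a ⊗ ¬h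
              obtain ⟨Θ, Ω₁, Ω₂, hCeq, hΘ, ⟨d₁, hh₁⟩, ⟨d₂, hh₂⟩⟩ := inv_tens prem
              obtain ⟨Θ', Ω₁', Ω₂', hCeq', hΘ', ⟨d₃, hh₃⟩, ⟨d₄, hh₄⟩⟩ := inv_tens d₁
              obtain ⟨Θ₁, h1, hΘ₁⟩ := inv_atom d₃
              obtain ⟨Γb, Δb, h2, hΓb, hΔb, d₅, hh₅⟩ := inv_bang d₄
              obtain ⟨d₆, hh₆⟩ := inv_neg (by simp [Fm.isNeg]) d₂
              have hH := (IHa _ d₆ (by simp; omega)).2.1 (fun F hF => by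
                  rcases Multiset.mem_cons.1 hF with rfl | hF
                  · exact Or.inr (Or.inr (Or.inr (Or.inr (Or.inr (Or.inr (Or.inr rfl))))))
                  · exact hOk _ (by rw [hCeq]; exact mem_of_mem_right hF))
                (by rw [Multiset.count_cons_of_ne (by simp)]
                    have e := ceq hCeq (Fm.atom 0)
                    simp only [Multiset.count_add] at e ⊢; omega)
                (by rw [Multiset.count_cons_of_ne (by simp)]
                    have e := ceq hCeq (Fm.atom 1)
                    simp only [Multiset.count_add] at e ⊢; omega)
              constructor
              · have eC := ceq hCeq (Fm.natom 0); simp only [Multiset.count_add] at eC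
                have e1 := ceq hCeq' (Fm.natom 0); simp only [Multiset.count_add] at e1
                have e2 : Multiset.count (Fm.natom 0) (Θ' + Ω₁') = 0 :=
                  count_finit_ne h1 hΘ₁ (notInf_natom 0) (natom_ne (by omega))
                simp only [Multiset.count_add] at e2
                have e3 := ceq h2 (Fm.natom 0); simp only [Multiset.count_add] at e3
                have e4 : Multiset.count (Fm.natom 0) Γb = 0 :=
                  cz hΓb (by rintro ⟨v, B, hB, -⟩; simp at hB)
                have e5 : Multiset.count (Fm.natom 0) Δb = 0 := czInf hΔb (notInf_natom 0)
                have e6 := hH.1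
                rw [Multiset.count_cons_of_ne (natom_ne (by omega))] at e6
                simp only [Multiset.count_add] at e6
                omega
              · have eC := ceq hCeq (Fm.natom 1); simp only [Multiset.count_add] at eC
                have e1 := ceq hCeq' (Fm.natom 1); simp only [Multiset.count_add] at e1
                have e2 : Multiset.count (Fm.natom 1) (Θ' + Ω₁') = 0 :=
                  count_finit_ne h1 hΘ₁ (notInf_natom 1) (natom_ne (by omega))
                simp only [Multiset.count_add] at e2
                have e3 := ceq h2 (Fm.natom 1); simp only [Multiset.count_add] at e3
                have e4 : Multiset.count (Fm.natom 1) Γb = 0 :=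
                  cz hΓb (by rintro ⟨v, B, hB, -⟩; simp at hB)
                have e5 : Multiset.count (Fm.natom 1) Δb = 0 := czInf hΔb (notInf_natom 1)
                have e6 := hH.2
                rw [Multiset.count_cons_of_ne (natom_ne (by omega))] at e6
                simp only [Multiset.count_add] at e6
                omega
            · -- h ⊗ !ᵇr_b ⊗ ¬h
              obtain ⟨Θ, Ω₁, Ω₂, hCeq, hΘ, ⟨d₁, hh₁⟩, ⟨d₂, hh₂⟩⟩ := inv_tens prem
              obtain ⟨Θ', Ω₁', Ω₂', hCeq', hΘ', ⟨d₃, hh₃⟩, ⟨d₄, hh₄⟩⟩ := inv_tens d₁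
              obtain ⟨Θ₁, h1, hΘ₁⟩ := inv_atom d₃
              obtain ⟨Γb, Δb, h2, hΓb, hΔb, d₅, hh₅⟩ := inv_bang d₄
              obtain ⟨d₆, hh₆⟩ := inv_neg (by simp [Fm.isNeg]) d₂
              have hH := (IHa _ d₆ (by simp; omega)).2.1 (fun F hF => by
                  rcases Multiset.mem_cons.1 hF with rfl | hF
                  · exact Or.inr (Or.inr (Or.inr (Or.inr (Or.inr (Or.inr (Or.inr rfl))))))
                  · exact hOk _ (by rw [hCeq]; exact mem_of_mem_right hF))
                (by rw [Multiset.count_cons_of_ne (by simp)]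
                    have e := ceq hCeq (Fm.atom 0)
                    simp only [Multiset.count_add] at e ⊢; omega)
                (by rw [Multiset.count_cons_of_ne (by simp)]
                    have e := ceq hCeq (Fm.atom 1)
                    simp only [Multiset.count_add] at e ⊢; omega)
              constructor
              · have eC := ceq hCeq (Fm.natom 0); simp only [Multiset.count_add] at eC
                have e1 := ceq hCeq' (Fm.natom 0); simp only [Multiset.count_add] at e1
                have e2 : Multiset.count (Fm.natom 0) (Θ' + Ω₁') = 0 :=
                  count_finit_ne h1 hΘ₁ (notInf_natom 0) (natom_ne (by omega))
                simp only [Multiset.count_add] at e2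
                have e3 := ceq h2 (Fm.natom 0); simp only [Multiset.count_add] at e3
                have e4 : Multiset.count (Fm.natom 0) Γb = 0 :=
                  cz hΓb (by rintro ⟨v, B, hB, -⟩; simp at hB)
                have e5 : Multiset.count (Fm.natom 0) Δb = 0 := czInf hΔb (notInf_natom 0)
                have e6 := hH.1
                rw [Multiset.count_cons_of_ne (natom_ne (by omega))] at e6
                simp only [Multiset.count_add] at e6
                omega
              · have eC := ceq hCeq (Fm.natom 1); simp only [Multiset.count_add] at eC
                have e1 := ceq hCeq' (Fm.natom 1); simp only [Multiset.count_add] at e1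
                have e2 : Multiset.count (Fm.natom 1) (Θ' + Ω₁') = 0 :=
                  count_finit_ne h1 hΘ₁ (notInf_natom 1) (natom_ne (by omega))
                simp only [Multiset.count_add] at e2
                have e3 := ceq h2 (Fm.natom 1); simp only [Multiset.count_add] at e3
                have e4 : Multiset.count (Fm.natom 1) Γb = 0 :=
                  cz hΓb (by rintro ⟨v, B, hB, -⟩; simp at hB)
                have e5 : Multiset.count (Fm.natom 1) Δb = 0 := czInf hΔb (notInf_natom 1)
                have e6 := hH.2
                rw [Multiset.count_cons_of_ne (natom_ne (by omega))] at e6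
                simp only [Multiset.count_add] at e6
                omega
            · -- h ⊗ !^∞1
              obtain ⟨Θ, Ω₁, Ω₂, hCeq, hΘ, ⟨d₁, hh₁⟩, ⟨d₂, hh₂⟩⟩ := inv_tens prem
              obtain ⟨Θ₁, h1, hΘ₁⟩ := inv_atom d₁
              obtain ⟨Γb, Δb, h2, hΓb, hΔb, d₅, hh₅⟩ := inv_bang d₂
              constructor
              · have eC := ceq hCeq (Fm.natom 0); simp only [Multiset.count_add] at eC
                have e2 : Multiset.count (Fm.natom 0) (Θ + Ω₁) = 0 :=
                  count_finit_ne h1 hΘ₁ (notInf_natom 0) (natom_ne (by omega))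
                simp only [Multiset.count_add] at e2
                have e3 := ceq h2 (Fm.natom 0); simp only [Multiset.count_add] at e3
                have e4 : Multiset.count (Fm.natom 0) Γb = 0 :=
                  cz hΓb (by rintro ⟨v, B, hB, -⟩; simp at hB)
                have e5 : Multiset.count (Fm.natom 0) Δb = 0 := czInf hΔb (notInf_natom 0)
                omega
              · have eC := ceq hCeq (Fm.natom 1); simp only [Multiset.count_add] at eC
                have e2 : Multiset.count (Fm.natom 1) (Θ + Ω₁) = 0 :=
                  count_finit_ne h1 hΘ₁ (notInf_natom 1) (natom_ne (by omega))
                simp only [Multiset.count_add] at e2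
                have e3 := ceq h2 (Fm.natom 1); simp only [Multiset.count_add] at e3
                have e4 : Multiset.count (Fm.natom 1) Γb = 0 :=
                  cz hΓb (by rintro ⟨v, B, hB, -⟩; simp at hB)
                have e5 : Multiset.count (Fm.natom 1) Δb = 0 := czInf hΔb (notInf_natom 1)
                omega
        · simp at h1
        · simp at h1
  -- ================= A-claim =================
  · intro hOk
    cases d with
    | par d' =>
        exact absurd (OkA.neutral (hOk _ (Multiset.mem_cons_self _ _))) (by simp [Fm.isNeutral])
    | bot d' =>
        exact absurd (OkA.neutral (hOk _ (Multiset.mem_cons_self _ _))) (by simp [Fm.isNeutral])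
    | decide hpos hΩn prem =>
        rcases hOk _ (Multiset.mem_cons_self _ _) with ⟨B, -, rfl⟩ | rfl | rfl | rfl
        · simp [Fm.isPos] at hpos
        · simp [Fm.isPos] at hpos
        · simp [Fm.isPos] at hpos
        · obtain ⟨Θ₁, h1, hΘ₁⟩ := inv_atom prem
          subst h1
          simp [Multiset.count_cons, czInf hΘ₁ (notInf_qmla _), czInf hΘ₁ (notInf_natom 0)]
    | ldecide hu hΩn prem =>
        rcases OkA.qm_cases (hOk _ (Multiset.mem_cons_self _ _)) with ⟨h1, -⟩ | ⟨rfl, rfl⟩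
        · exact absurd h1 hu
        · obtain ⟨d'', hlt⟩ := inv_neg (by simp [Fm.isNeg]) prem
          have hA' := (IHa _ d'' (by simp; omega)).2.2.1 (fun F hF => by
            rcases Multiset.mem_cons.1 hF with rfl | hF
            · exact Or.inr (Or.inr (Or.inl rfl))
            · exact hOk _ (Multiset.mem_cons_of_mem hF))
          rw [Multiset.count_cons_of_ne (by simp), Multiset.count_cons_self] at hA'
          rw [Multiset.count_cons_self, Multiset.count_cons_of_ne (by simp)]
          omega
    | udecide hΩn prem =>
        rcases OkA.qm_cases (hOk _ (Multiset.mem_cons_self _ _)) with ⟨-, hpi⟩ | ⟨h1, -⟩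
        · exact (stuck_focus hpi (fun s hs => OkA.natom_le (hOk _ hs)) prem).elim
        · simp at h1
  -- ================= B-claim =================
  · intro hOk
    cases d with
    | par d' =>
        exact absurd (OkB.neutral (hOk _ (Multiset.mem_cons_self _ _))) (by simp [Fm.isNeutral])
    | bot d' =>
        exact absurd (OkB.neutral (hOk _ (Multiset.mem_cons_self _ _))) (by simp [Fm.isNeutral])
    | decide hpos hΩn prem =>
        rcases hOk _ (Multiset.mem_cons_self _ _) with ⟨B, -, rfl⟩ | rfl | rfl | rfl
        · simp [Fm.isPos] at hpos
        · simp [Fm.isPos] at hpos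
        · simp [Fm.isPos] at hpos
        · obtain ⟨Θ₁, h1, hΘ₁⟩ := inv_atom prem
          subst h1
          simp [Multiset.count_cons, czInf hΘ₁ (notInf_qmlb _), czInf hΘ₁ (notInf_natom 1)]
    | ldecide hu hΩn prem =>
        rcases OkB.qm_cases (hOk _ (Multiset.mem_cons_self _ _)) with ⟨h1, -⟩ | ⟨rfl, rfl⟩
        · exact absurd h1 hu
        · obtain ⟨d'', hlt⟩ := inv_neg (by simp [Fm.isNeg]) prem
          have hB' := (IHa _ d'' (by simp; omega)).2.2.2 (fun F hF => by
            rcases Multiset.mem_cons.1 hF with rfl | hF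
            · exact Or.inr (Or.inr (Or.inl rfl))
            · exact hOk _ (Multiset.mem_cons_of_mem hF))
          rw [Multiset.count_cons_of_ne (by simp), Multiset.count_cons_self] at hB'
          rw [Multiset.count_cons_self, Multiset.count_cons_of_ne (by simp)]
          omega
    | udecide hΩn prem =>
        rcases OkB.qm_cases (hOk _ (Multiset.mem_cons_self _ _)) with ⟨-, hpi⟩ | ⟨h1, -⟩
        · exact (stuck_focus hpi (fun s hs => OkB.natom_le (hOk _ hs)) prem).elim
        · simp at h1

/-- If the focused sequent calculus derives `⊢ ?^∞Π, ⟨c₀⟩`,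
then the two-register Minsky machine halts from the configuration `c₀`. -/
theorem focused_derivable_implies_halting (M : Prog) (hdet : Deterministic M)
    (hwf : WellFormed M) (c₀ : Cfg)
    (h : FDer (encSeq M c₀) none) : Halts M c₀ := by
  obtain ⟨d⟩ := toT h
  have hAll : AllInf (qmInf (PiCtx M)) := by
    intro F hF
    obtain ⟨B, -, rfl⟩ := Multiset.mem_map.1 hF
    exact ⟨B, rfl⟩
  obtain ⟨q, a, b⟩ := c₀
  have hsh : ∀ F ∈ encSeq M ⟨q, a, b⟩, Ok M (q+3) F := by
    intro F hF
    simp only [encSeq, encCfg, Multiset.mem_add] at hF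
    rcases hF with hF | (hF | hF) | hF
    · obtain ⟨B, hB, rfl⟩ := Multiset.mem_map.1 hF
      exact Or.inl ⟨B, hB, rfl⟩
    · rw [Multiset.eq_of_mem_replicate hF]
      exact Or.inr (Or.inl rfl)
    · rw [Multiset.eq_of_mem_replicate hF]
      exact Or.inr (Or.inr (Or.inl rfl))
    · rw [Multiset.mem_singleton.1 hF]
      exact Or.inr (Or.inr (Or.inr (Or.inr (Or.inr (Or.inr (Or.inr rfl))))))
  have cRa : Multiset.count (Fm.atom 0) (encSeq M ⟨q, a, b⟩) = 0 := by
    simp [encSeq, encCfg, Multiset.count_add, Multiset.count_replicate,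
      Multiset.count_singleton, czInf hAll (notInf_atom 0), qa, qb, nSt, nRa, nRb]
  have cRb : Multiset.count (Fm.atom 1) (encSeq M ⟨q, a, b⟩) = 0 := by
    simp [encSeq, encCfg, Multiset.count_add, Multiset.count_replicate,
      Multiset.count_singleton, czInf hAll (notInf_atom 1), qa, qb, nSt, nRa, nRb]
  have cOne : Multiset.count (Fm.natom (q+3)) (encSeq M ⟨q, a, b⟩) = 1 := by
    simp [encSeq, encCfg, Multiset.count_add, Multiset.count_replicate,
      Multiset.count_singleton, czInf hAll (notInf_natom (q+3)), qa, qb, nSt, nRa, nRb]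
  have cQa : Multiset.count (Fm.qm Lbl.la (Fm.natom 0)) (encSeq M ⟨q, a, b⟩) = a := by
    simp [encSeq, encCfg, Multiset.count_add, Multiset.count_replicate,
      Multiset.count_singleton, czInf hAll (notInf_qmla _), qa, qb, nSt, nRa, nRb]
  have cQb : Multiset.count (Fm.qm Lbl.lb (Fm.natom 1)) (encSeq M ⟨q, a, b⟩) = b := by
    simp [encSeq, encCfg, Multiset.count_add, Multiset.count_replicate,
      Multiset.count_singleton, czInf hAll (notInf_qmlb _), qa, qb, nSt, nRa, nRb]
  have hI := (core M hwf (ht d) _ d le_rfl).1 q hsh cRa cRb cOne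
  rw [cQa, cQb] at hI
  exact hI.2.2

end Msel
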